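/- arXiv:2105.05048 — 4 statements merged into one kernel-verified Lean document; each statement's English description precedes it below -/
import Mathlib

section
/- For Re(s) > 1, the square of the Dirichlet series F(s) = \sum_{n\ge 1} 1_E(n) n^{-s}, where 1_E is the indicator of sums of two squares, equals \zeta(s) L(s,\chi_4) (1 - 2^{-s})^{-1} \prod_{p \equiv 3 (4)} (1 - p^{-2s})^{-1}, where \chi_4 is the nontrivial Dirichlet character mod 4. -/
/-!
By the two-squares theorem `p ^ e` is a sum of two squares iff `p % 4 ≠ 3` or `e` is even, so the
multiplicative function `1_E` has Euler factor `(1 - p^{-2s})⁻¹` at `p ≡ 3 (mod 4)` and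
`(1 - p^{-s})⁻¹` at the other primes. Square these factors and compare them with the Euler factors
`(1 - p^{-s})⁻¹ (1 - χ₄(p) p^{-s})⁻¹` of `ζ(s) L(s, χ₄)`: they agree for `p ≡ 1 (mod 4)`, whereas
at `p = 2` a factor `(1 - 2^{-s})⁻¹` and at `p ≡ 3 (mod 4)` a factor `(1 - p^{-2s})⁻¹` is missing.
-/

open Complex

theorem ArithmeticFunction.IsMultiplicative.LSeries_eulerProduct_hasProd
    {f : ArithmeticFunction ℂ} (hf : f.IsMultiplicative) {s : ℂ} (hs : LSeriesSummable f s) :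
    HasProd (fun p : Nat.Primes => ∑' e : ℕ, f (p ^ e) * ((p : ℂ) ^ (-s)) ^ e) (LSeries f s) := by
  have hterm_mul {m n : ℕ} (hmn : m.Coprime n) :
      LSeries.term f s (m * n) = LSeries.term f s m * LSeries.term f s n := by
    rcases eq_or_ne m 0 with rfl | hm
    · simp
    rcases eq_or_ne n 0 with rfl | hn
    · simp
    simp only [LSeries.term_of_ne_zero (mul_ne_zero hm hn), LSeries.term_of_ne_zero hm,
      LSeries.term_of_ne_zero hn, hf.map_mul_of_coprime hmn, Nat.cast_mul,
      natCast_mul_natCast_cpow, mul_div_mul_comm]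
  have hprod := EulerProduct.eulerProduct_hasProd (f := LSeries.term f s)
    (by simp [hf.map_one]) hterm_mul hs.norm (LSeries.term_zero f s)
  have hlocal (p e : ℕ) : LSeries.term f s (p ^ e) = f (p ^ e) * ((p : ℂ) ^ (-s)) ^ e := by
    rw [LSeries.term_def₀ f.map_zero, Nat.cast_pow, ← natCast_cpow_natCast_mul, cpow_nat_mul]
  simp only [hlocal] at hprod
  exact hprod

theorem tsum_ite_even_geometric {x : ℂ} (hx : ‖x‖ < 1) :
    ∑' e : ℕ, (if Even e then x ^ e else 0) = (1 - x ^ 2)⁻¹ := by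
  have hsupp : (Function.support fun e : ℕ => if Even e then x ^ e else 0) ⊆
      Set.range (2 * ·) := fun e he => by
    have heven : Even e := by
      by_contra h
      simp [h] at he
    obtain ⟨k, rfl⟩ := even_iff_two_dvd.mp heven
    exact ⟨k, rfl⟩
  rw [← (mul_right_injective₀ two_ne_zero).tsum_eq hsupp]
  simp only [even_two_mul, if_true, pow_mul]
  exact tsum_geometric_of_norm_lt_one (by simpa using pow_lt_one₀ (norm_nonneg x) hx two_ne_zero)

theorem norm_natCast_cpow_neg_lt_one {n : ℕ} (hn : 1 < n) {s : ℂ} (hs : 0 < s.re) :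
    ‖(n : ℂ) ^ (-s)‖ < 1 := by
  rw [norm_natCast_cpow_of_pos (by omega), neg_re]
  exact Real.rpow_lt_one_of_one_lt_of_neg (by exact_mod_cast hn) (neg_neg_of_pos hs)

theorem multipliable_one_sub_inv {ι : Type*} {f : ι → ℂ} (hf : Summable (‖f ·‖))
    (hf1 : ∀ i, f i ≠ 1) : Multipliable fun i => (1 - f i)⁻¹ := by
  have hne : ∀ i, 1 + -f i ≠ 0 := fun i => by
    rw [← sub_eq_add_neg, sub_ne_zero]; exact (hf1 i).symm
  have hsum : Summable (‖-f ·‖) := by simpa only [norm_neg] using hf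
  simpa only [sub_eq_add_neg] using ((multipliable_one_add_of_summable hsum).hasProd.inv₀
    (tprod_one_add_ne_zero_of_summable hne hsum)).multipliable

theorem hasProd_subtype_primes_iff {α : Type*} [CommMonoid α] [TopologicalSpace α]
    (P : ℕ → Prop) [DecidablePred P] (g : ℕ → α) {a : α} :
    HasProd (fun p : {p : ℕ // p.Prime ∧ P p} => g p) a ↔
      HasProd (fun p : Nat.Primes => if P p then g p else 1) a := by
  let i : {p : ℕ // p.Prime ∧ P p} → Nat.Primes := fun p => ⟨p, p.2.1⟩
  have hi : Function.Injective i := fun p q h =>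
    Subtype.ext (congrArg (fun r : Nat.Primes => (r : ℕ)) h)
  have hcomp : (fun p : Nat.Primes => if P p then g p else 1) ∘ i =
      fun p : {p : ℕ // p.Prime ∧ P p} => g p :=
    funext fun p => if_pos p.2.2
  rw [← hcomp]
  exact hi.hasProd_iff fun p hp => if_neg fun hP => hp ⟨⟨p, p.2, hP⟩, rfl⟩

theorem hasProd_primes_ite_one_sub_cpow_inv (P : ℕ → Prop) [DecidablePred P] {w : ℂ}
    (hw : 1 < w.re) :
    HasProd (fun p : Nat.Primes => if P p then (1 - (p : ℂ) ^ (-w))⁻¹ else 1)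
      (∏' p : {p : ℕ // p.Prime ∧ P p}, (1 - (p : ℂ) ^ (-w))⁻¹) := by
  have hsum : Summable fun p : {p : ℕ // p.Prime ∧ P p} => ‖(p : ℂ) ^ (-w)‖ :=
    (summable_riemannZetaSummand hw).comp_injective Subtype.val_injective
  have hne (p : {p : ℕ // p.Prime ∧ P p}) : (p : ℂ) ^ (-w) ≠ 1 := fun h =>
    (norm_natCast_cpow_neg_lt_one p.2.1.one_lt (by linarith)).ne (by rw [h, norm_one])
  have hmul := (multipliable_one_sub_inv hsum hne).hasProd
  exact (hasProd_subtype_primes_iff P (fun p : ℕ => (1 - (p : ℂ) ^ (-w))⁻¹)).mp hmul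

theorem exists_int_sq_add_sq_iff_exists_nat (n : ℕ) :
    (∃ a b : ℤ, (n : ℤ) = a ^ 2 + b ^ 2) ↔ ∃ x y : ℕ, n = x ^ 2 + y ^ 2 := by
  constructor
  · rintro ⟨a, b, h⟩
    refine ⟨a.natAbs, b.natAbs, ?_⟩
    zify
    simpa only [Int.natCast_natAbs, sq_abs] using h
  · rintro ⟨x, y, h⟩
    exact ⟨x, y, by exact_mod_cast h⟩

theorem exists_int_sq_add_sq_iff_even_factorization (n : ℕ) :
    (∃ a b : ℤ, (n : ℤ) = a ^ 2 + b ^ 2) ↔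
      ∀ q, q.Prime → q % 4 = 3 → Even (n.factorization q) := by
  rw [exists_int_sq_add_sq_iff_exists_nat, Nat.eq_sq_add_sq_iff]
  refine forall_congr' fun q => ?_
  by_cases hq : q ∈ n.primeFactors
  · have hq' := Nat.prime_of_mem_primeFactors hq
    simp [hq, hq', Nat.factorization_def n hq']
  · have h0 : n.factorization q = 0 :=
      Finsupp.notMem_support_iff.mp (by rwa [Nat.support_factorization])
    simp [hq, h0]

theorem exists_int_sq_add_sq_mul_iff {m n : ℕ} (hm : m ≠ 0) (hn : n ≠ 0) (hmn : m.Coprime n) :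
    (∃ a b : ℤ, ((m * n : ℕ) : ℤ) = a ^ 2 + b ^ 2) ↔
      (∃ a b : ℤ, (m : ℤ) = a ^ 2 + b ^ 2) ∧ (∃ a b : ℤ, (n : ℤ) = a ^ 2 + b ^ 2) := by
  simp only [exists_int_sq_add_sq_iff_even_factorization, Nat.factorization_mul hm hn,
    Finsupp.add_apply, ← forall_and]
  refine forall_congr' fun q => forall_congr' fun hq => forall_congr' fun _ => ?_
  have : m.factorization q = 0 ∨ n.factorization q = 0 := by
    by_contra! h
    exact hq.one_lt.ne' <| Nat.eq_one_of_dvd_coprimes hmn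
      (Nat.dvd_of_factorization_pos h.1) (Nat.dvd_of_factorization_pos h.2)
  rcases this with h | h <;> simp [h]

theorem exists_int_sq_add_sq_prime_pow_iff {p : ℕ} (hp : p.Prime) (e : ℕ) :
    (∃ a b : ℤ, ((p ^ e : ℕ) : ℤ) = a ^ 2 + b ^ 2) ↔ (p % 4 = 3 → Even e) := by
  simp only [exists_int_sq_add_sq_iff_even_factorization, hp.factorization_pow,
    Finsupp.single_apply]
  constructor
  · exact fun h => by simpa using h p hp
  · intro h q _ hq
    split_ifs with hpq
    · exact h (hpq ▸ hq)
    · exact Even.zero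

open scoped Classical in
noncomputable def sumTwoSqIndicator : ArithmeticFunction ℂ :=
  ⟨fun n => if 0 < n ∧ ∃ a b : ℤ, (n : ℤ) = a ^ 2 + b ^ 2 then 1 else 0, by simp⟩

open scoped Classical in
theorem sumTwoSqIndicator_apply (n : ℕ) : sumTwoSqIndicator n =
    if 0 < n ∧ ∃ a b : ℤ, (n : ℤ) = a ^ 2 + b ^ 2 then 1 else 0 := rfl

open scoped Classical in
theorem LSeries_sumTwoSqIndicator_eq_tsum (s : ℂ) :
    LSeries sumTwoSqIndicator s =
      ∑' n : ℕ, (if 0 < n ∧ ∃ a b : ℤ, (n : ℤ) = a ^ 2 + b ^ 2 then 1 else 0) / (n : ℂ) ^ s := by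
  refine tsum_congr fun n => ?_
  rcases eq_or_ne n 0 with rfl | hn
  · simp
  · rw [LSeries.term_of_ne_zero hn, sumTwoSqIndicator_apply]

theorem isMultiplicative_sumTwoSqIndicator : sumTwoSqIndicator.IsMultiplicative := by
  refine ⟨if_pos ⟨one_pos, 1, 0, by norm_num⟩, fun {m n} hmn => ?_⟩
  rcases eq_or_ne m 0 with rfl | hm
  · simp [sumTwoSqIndicator_apply]
  rcases eq_or_ne n 0 with rfl | hn
  · simp [sumTwoSqIndicator_apply]
  have hsq := exists_int_sq_add_sq_mul_iff hm hn hmn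
  push_cast at hsq
  simp only [sumTwoSqIndicator_apply, Nat.cast_mul, Nat.pos_of_ne_zero hm, Nat.pos_of_ne_zero hn,
    Nat.pos_of_ne_zero (mul_ne_zero hm hn), true_and]
  split_ifs <;> simp_all

theorem norm_sumTwoSqIndicator_le_one (n : ℕ) : ‖sumTwoSqIndicator n‖ ≤ 1 := by
  rw [sumTwoSqIndicator_apply]
  split_ifs <;> simp

theorem sumTwoSqIndicator_prime_pow {p : ℕ} (hp : p.Prime) (e : ℕ) :
    sumTwoSqIndicator (p ^ e) = if p % 4 = 3 → Even e then 1 else 0 := by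
  simp only [sumTwoSqIndicator_apply, pow_pos hp.pos, true_and,
    exists_int_sq_add_sq_prime_pow_iff hp]

noncomputable def sumTwoSqEulerFactor (p : ℕ) (x : ℂ) : ℂ :=
  if p % 4 = 3 then (1 - x ^ 2)⁻¹ else (1 - x)⁻¹

theorem tsum_sumTwoSqIndicator_prime_pow_mul_pow {p : ℕ} (hp : p.Prime) {x : ℂ} (hx : ‖x‖ < 1) :
    ∑' e : ℕ, sumTwoSqIndicator (p ^ e) * x ^ e = sumTwoSqEulerFactor p x := by
  simp only [sumTwoSqIndicator_prime_pow hp, ite_mul, one_mul, zero_mul, sumTwoSqEulerFactor]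
  split_ifs with h3
  · simpa [h3] using tsum_ite_even_geometric hx
  · simpa [h3] using tsum_geometric_of_norm_lt_one hx

theorem LSeries_sumTwoSqIndicator_hasProd {s : ℂ} (hs : 1 < s.re) :
    HasProd (fun p : Nat.Primes => sumTwoSqEulerFactor p ((p : ℂ) ^ (-s)))
      (LSeries sumTwoSqIndicator s) := by
  have hsum : LSeriesSummable sumTwoSqIndicator s :=
    LSeriesSummable_of_bounded_of_one_lt_re (fun n _ => norm_sumTwoSqIndicator_le_one n) hs
  have hprod := isMultiplicative_sumTwoSqIndicator.LSeries_eulerProduct_hasProd hsum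
  simp only [fun p : Nat.Primes => tsum_sumTwoSqIndicator_prime_pow_mul_pow p.prop
    (norm_natCast_cpow_neg_lt_one p.prop.one_lt (s := s) (by linarith))] at hprod
  exact hprod

theorem sumTwoSqEulerFactor_sq {p : ℕ} (hp : p.Prime) (x : ℂ) :
    sumTwoSqEulerFactor p x ^ 2 =
      (1 - x)⁻¹ * (1 - (ZMod.χ₄ p : ℂ) * x)⁻¹ * (if p = 2 then (1 - x)⁻¹ else 1) *
        (if p % 4 = 3 then (1 - x ^ 2)⁻¹ else 1) := by
  unfold sumTwoSqEulerFactor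
  rcases hp.eq_two_or_odd with rfl | hodd
  · rw [if_neg (by decide), if_pos rfl, if_neg (by decide), show ZMod.χ₄ (2 : ℕ) = 0 by decide]
    push_cast
    ring
  have hp2 : p ≠ 2 := by rintro rfl; simp at hodd
  rcases Nat.odd_mod_four_iff.mp hodd with h1 | h3
  · rw [if_neg (by omega), if_neg hp2, if_neg (by omega), ZMod.χ₄_nat_one_mod_four h1]
    push_cast
    ring
  · rw [if_pos h3, if_neg hp2, if_pos h3, ZMod.χ₄_nat_three_mod_four h3,
      show 1 - x ^ 2 = (1 - x) * (1 + x) by ring, mul_inv]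
    push_cast
    ring

open scoped LSeries.notation in
/-- For `Re(s) > 1`, the square of the Dirichlet series of the indicator of sums of
two squares equals `ζ(s) L(s,χ₄) (1-2^{-s})^{-1} ∏_{p ≡ 3 (4)} (1-p^{-2s})^{-1}`. -/
theorem statement0 (s : ℂ) (hs : 1 < s.re) :
    (∑' n : ℕ,
        (open scoped Classical in
          if 0 < n ∧ ∃ a b : ℤ, (n : ℤ) = a ^ 2 + b ^ 2 then (1 : ℂ) else 0) / (n : ℂ) ^ s) ^ 2
      = riemannZeta s * LSeries (fun n => ((ZMod.χ₄ (n : ZMod 4) : ℤ) : ℂ)) s *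
          (1 - (2 : ℂ) ^ (-s))⁻¹ *
          ∏' p : {p : ℕ // p.Prime ∧ p % 4 = 3}, (1 - ((p : ℕ) : ℂ) ^ (-2 * s))⁻¹ := by
  let χ : DirichletCharacter ℂ 4 := ZMod.χ₄.ringHomComp (Int.castRingHom ℂ)
  have hL : LSeries (fun n => ((ZMod.χ₄ (n : ZMod 4) : ℤ) : ℂ)) s = LSeries ↗χ s := rfl
  have h2s : 1 < (2 * s).re := by
    simp only [mul_re, re_ofNat, im_ofNat, zero_mul, sub_zero]; linarith
  have hF := LSeries_sumTwoSqIndicator_hasProd hs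
  have htwo : HasProd (fun p : Nat.Primes => if (p : ℕ) = 2 then (1 - (p : ℂ) ^ (-s))⁻¹ else 1)
      (1 - (2 : ℂ) ^ (-s))⁻¹ := by
    simpa using hasProd_single
      (f := fun p : Nat.Primes => if (p : ℕ) = 2 then (1 - (p : ℂ) ^ (-s))⁻¹ else 1)
      ⟨2, Nat.prime_two⟩ fun p hp => if_neg fun h => hp (Subtype.ext h)
  have hB := hasProd_primes_ite_one_sub_cpow_inv (· % 4 = 3) h2s
  have hRHS := (((riemannZeta_eulerProduct_hasProd hs).mul (χ.LSeries_eulerProduct_hasProd hs)).mul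
    htwo).mul hB
  rw [← LSeries_sumTwoSqIndicator_eq_tsum, hL, sq]
  simp only [neg_mul]
  refine (hF.mul hF).unique (hRHS.congr_fun ?_)
  intro p
  have hχ : χ (p : ℕ) = ((ZMod.χ₄ (p : ℕ) : ℤ) : ℂ) := by
    simp [χ, MulChar.ringHomComp_apply]
  rw [← mul_neg, cpow_ofNat_mul, hχ, ← sq, sumTwoSqEulerFactor_sq p.prop]
end

section
/- Let k \ge 2, let q_1,...,q_k be positive integers and G_1,...,G_k be 1-periodic complex-valued functions. Then |\sum_{(a_1,...,a_k): 1 \le a_i \le q_i, \gcd(a_i,q_i)=1, \sum_i a_i/q_i \in \mathbb{Z}} \prod_{i=1}^k G_i(a_i/q_i)| \le (1/\mathrm{lcm}(q_1,...,q_k)) \prod_{i=1}^k (q_i \sum_{1 \le a_i \le q_i, \gcd(a_i,q_i)=1} |G_i(a_i/q_i)|^2)^{1/2}. -/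
/-!
The bound is multiplicative in the moduli. Let `p` be the least prime factor of `lcm q` and write
`q i = P i * m i` with `P i` the `p`-part of `q i`. By the Chinese remainder theorem a reduced
fraction `a / q i` is `b / P i + c / m i` modulo one with `b`, `c` reduced, and as `lcm P` and
`lcm m` are coprime, `∑ a i / q i` is an integer iff both `∑ b i / P i` and `∑ c i / m i` are.
The sum thus becomes a sum over the admissible `c` of sums for the moduli `P` with `G i` shifted
by `c i / m i`. Bounding these by the prime-power case leaves a sum for the moduli `m` whose
functions are the `ℓ²`-norms of the shifted `G i`, and induction on the lcm bounds it; the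
energies of these norms modulo `m i` are exactly those of `G i` modulo `q i`.

For powers of a single prime, either the largest exponent is attained only once, and then no
tuple is admissible, or it is attained at `i₀ ≠ j₀`. A tuple is then determined by its entries
off `j₀`, and also by those off `i₀`, so Cauchy–Schwarz applied to the splitting
`(∏_{i ≠ j₀} |G i|) · |G j₀|` gives the bound.
-/

open Finset Function

namespace MontgomeryVaughan

def reducedResidues (q : ℕ) : Finset ℕ := (Icc 1 q).filter (·.Coprime q)

noncomputable def residueEnergy (q : ℕ) (g : ℝ → ℂ) : ℝ :=
  ∑ b ∈ reducedResidues q, ‖g ((b : ℝ) / (q : ℝ))‖ ^ 2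

lemma residueEnergy_nonneg (q : ℕ) (g : ℝ → ℂ) : 0 ≤ residueEnergy q g :=
  sum_nonneg fun _ _ => by positivity

lemma card_reducedResidues (q : ℕ) : #(reducedResidues q) = q.totient := by
  rw [← Nat.filter_coprime_Ico_eq_totient q 1, add_comm, Ico_add_one_right_eq_Icc, reducedResidues]
  simp only [Nat.coprime_comm]

lemma card_reducedResidues_le (q : ℕ) : #(reducedResidues q) ≤ q := by
  rw [card_reducedResidues]
  exact Nat.totient_le q

def repIcc (x q : ℕ) : ℕ := if x % q = 0 then q else x % q

lemma repIcc_modEq (x q : ℕ) : repIcc x q ≡ x [MOD q] := by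
  unfold repIcc Nat.ModEq
  split_ifs with h
  · simp [h]
  · exact Nat.mod_mod x q

lemma repIcc_mem {q : ℕ} (hq : 0 < q) (x : ℕ) : repIcc x q ∈ Icc 1 q := by
  have := Nat.mod_lt x hq
  unfold repIcc
  split_ifs <;> simp only [mem_Icc] <;> omega

lemma eq_of_modEq_of_mem_Icc {a b q : ℕ} (ha : a ∈ Icc 1 q) (hb : b ∈ Icc 1 q)
    (h : a ≡ b [MOD q]) : a = b := by
  rw [mem_Icc] at ha hb
  have h' : a - 1 + 1 ≡ b - 1 + 1 [MOD q] := by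
    rwa [Nat.sub_add_cancel ha.1, Nat.sub_add_cancel hb.1]
  have := (Nat.ModEq.add_right_cancel' 1 h').eq_of_lt_of_lt (by omega) (by omega)
  omega

lemma exists_int_div_eq_of_modEq {K : Type*} [Field K] [CharZero K] {x y n : ℕ} (hn : n ≠ 0)
    (h : x ≡ y [MOD n]) : ∃ t : ℤ, (x : K) / n = y / n + t := by
  obtain ⟨t, ht⟩ := Nat.modEq_iff_dvd.mp h
  refine ⟨-t, ?_⟩
  have ht' : (y : K) - x = n * t := by exact_mod_cast ht
  have hn' : (n : K) ≠ 0 := Nat.cast_ne_zero.2 hn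
  field_simp
  push_cast
  linear_combination -ht'

def crt (P m b c : ℕ) : ℕ := repIcc (b * m + c * P) (P * m)

section crt

variable {P m : ℕ}

lemma exists_int_crt_div_eq {K : Type*} [Field K] [CharZero K] (hP : 0 < P) (hm : 0 < m)
    (b c : ℕ) : ∃ t : ℤ, (crt P m b c : K) / (P * m : ℕ) = b / P + c / m + t := by
  obtain ⟨t, ht⟩ := exists_int_div_eq_of_modEq (K := K) (Nat.mul_pos hP hm).ne' (repIcc_modEq _ _)
  refine ⟨t, ht.trans ?_⟩
  have hP' : (P : K) ≠ 0 := Nat.cast_ne_zero.2 hP.ne'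
  have hm' : (m : K) ≠ 0 := Nat.cast_ne_zero.2 hm.ne'
  field_simp
  push_cast
  ring

lemma crt_mem (hP : 0 < P) (hm : 0 < m) (hco : P.Coprime m) {b c : ℕ}
    (hb : b ∈ reducedResidues P) (hc : c ∈ reducedResidues m) :
    crt P m b c ∈ reducedResidues (P * m) := by
  simp only [crt, reducedResidues, mem_filter] at hb hc ⊢
  refine ⟨repIcc_mem (Nat.mul_pos hP hm) _, ?_⟩
  rw [Nat.Coprime, (repIcc_modEq _ _).gcd_eq]
  refine Nat.Coprime.mul_right ?_ ?_
  · rw [Nat.add_coprime_iff_left (dvd_mul_left P c)]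
    exact hb.2.mul_left hco.symm
  · rw [Nat.add_coprime_iff_right (dvd_mul_left m b)]
    exact hc.2.mul_left hco

lemma crt_injOn (hco : P.Coprime m) :
    Set.InjOn (fun x : ℕ × ℕ => crt P m x.1 x.2) ↑(reducedResidues P ×ˢ reducedResidues m) := by
  rintro ⟨b, c⟩ hbc ⟨b', c'⟩ hbc' h
  simp only [coe_product, Set.mem_prod, mem_coe, reducedResidues, mem_filter] at hbc hbc'
  have h' : b * m + c * P ≡ b' * m + c' * P [MOD P * m] :=
    (repIcc_modEq _ _).symm.trans ((congrArg (· % (P * m)) h).trans (repIcc_modEq _ _))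
  have hb : b * m ≡ b' * m [MOD P] := by
    simpa [Nat.ModEq, Nat.add_mul_mod_self_right] using h'.of_mul_right m
  have hc : c * P ≡ c' * P [MOD m] := by
    simpa [Nat.ModEq, Nat.mul_mod_left] using h'.of_mul_left P
  simp only [Prod.mk.injEq]
  exact ⟨eq_of_modEq_of_mem_Icc hbc.1.1 hbc'.1.1 (hb.cancel_right_of_coprime hco),
    eq_of_modEq_of_mem_Icc hbc.2.1 hbc'.2.1 (hc.cancel_right_of_coprime hco.symm)⟩

lemma crt_bijOn (hP : 0 < P) (hm : 0 < m) (hco : P.Coprime m) :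
    Set.BijOn (fun x : ℕ × ℕ => crt P m x.1 x.2) ↑(reducedResidues P ×ˢ reducedResidues m)
      (reducedResidues (P * m)) := by
  have hmaps : Set.MapsTo (fun x : ℕ × ℕ => crt P m x.1 x.2)
      ↑(reducedResidues P ×ˢ reducedResidues m) ↑(reducedResidues (P * m)) := fun x hx =>
    crt_mem hP hm hco (mem_product.1 hx).1 (mem_product.1 hx).2
  refine ⟨hmaps, crt_injOn hco, surjOn_of_injOn_of_card_le _ hmaps (crt_injOn hco) ?_⟩
  rw [card_product, card_reducedResidues, card_reducedResidues, card_reducedResidues,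
    Nat.totient_mul hco]

lemma sum_reducedResidues_mul {M : Type*} [AddCommMonoid M] {F : ℝ → M} (hF : Periodic F 1)
    (hP : 0 < P) (hm : 0 < m) (hco : P.Coprime m) :
    ∑ a ∈ reducedResidues (P * m), F (a / (P * m : ℕ)) =
      ∑ c ∈ reducedResidues m, ∑ b ∈ reducedResidues P, F (b / P + c / m) := by
  have hbij := crt_bijOn hP hm hco
  rw [← sum_product_right' (f := fun (b c : ℕ) => F (b / P + c / m))]
  refine (sum_nbij _ hbij.mapsTo hbij.injOn hbij.surjOn fun x _ => ?_).symm
  obtain ⟨t, ht⟩ := exists_int_crt_div_eq (K := ℝ) hP hm x.1 x.2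
  rw [ht]
  simpa using (hF.int_mul t _).symm

end crt

lemma sum_div_mul_lcm {ι : Type*} (s : Finset ι) (b q : ι → ℕ) :
    (∑ i ∈ s, (b i : ℚ) / q i) * (s.lcm q : ℕ) = ((∑ i ∈ s, b i * (s.lcm q / q i) : ℕ) : ℚ) := by
  rw [sum_mul]
  push_cast
  refine sum_congr rfl fun i hi => ?_
  rw [Nat.cast_div_charZero (Finset.dvd_lcm hi)]
  ring

lemma exists_intCast_eq_of_add {R : Type*} [CommRing R] {x y : R} {D₁ D₂ : ℕ}
    (hD : D₁.Coprime D₂) (hx : ∃ z : ℤ, x * D₁ = z) (hy : ∃ z : ℤ, y * D₂ = z)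
    (hxy : ∃ n : ℤ, x + y = n) : ∃ n : ℤ, x = n := by
  obtain ⟨z₁, hz₁⟩ := hx
  obtain ⟨z₂, hz₂⟩ := hy
  obtain ⟨n, hn⟩ := hxy
  have hbezout : (1 : R) = D₁ * D₁.gcdA D₂ + D₂ * D₁.gcdB D₂ := by
    have := congrArg (Int.cast : ℤ → R) (Nat.gcd_eq_gcd_ab D₁ D₂)
    rwa [hD, Nat.cast_one, Int.cast_one, Int.cast_add, Int.cast_mul, Int.cast_mul,
      Int.cast_natCast, Int.cast_natCast] at this
  refine ⟨z₁ * D₁.gcdA D₂ + (n * D₂ - z₂) * D₁.gcdB D₂, ?_⟩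
  push_cast
  linear_combination x * hbezout + D₁.gcdA D₂ * hz₁ + D₁.gcdB D₂ * D₂ * hn - D₁.gcdB D₂ * hz₂

lemma lcm_mul_of_coprime {ι : Type*} (s : Finset ι) {P m : ι → ℕ}
    (h : (s.lcm P).Coprime (s.lcm m)) : s.lcm (P * m) = s.lcm P * s.lcm m :=
  Nat.dvd_antisymm (Finset.lcm_dvd fun _ hi => mul_dvd_mul (Finset.dvd_lcm hi) (Finset.dvd_lcm hi))
    (h.mul_dvd_of_dvd_of_dvd (lcm_mono_fun fun _ _ => dvd_mul_right _ _)
      (lcm_mono_fun fun _ _ => dvd_mul_left _ _))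

lemma coprime_of_coprime_lcm {ι : Type*} {s : Finset ι} {P m : ι → ℕ}
    (h : (s.lcm P).Coprime (s.lcm m)) {i : ι} (hi : i ∈ s) : (P i).Coprime (m i) :=
  (h.coprime_dvd_left (Finset.dvd_lcm hi)).coprime_dvd_right (Finset.dvd_lcm hi)

variable {ι : Type*} [Fintype ι]

lemma exists_int_sum_crt_div_eq {P m : ι → ℕ} (hP : ∀ i, 0 < P i) (hm : ∀ i, 0 < m i)
    (b c : ι → ℕ) : ∃ t : ℤ, ∑ i, (crt (P i) (m i) (b i) (c i) : ℚ) / (P i * m i : ℕ) =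
      ∑ i, (b i : ℚ) / P i + ∑ i, (c i : ℚ) / m i + t := by
  choose t ht using fun i => exists_int_crt_div_eq (K := ℚ) (hP i) (hm i) (b i) (c i)
  refine ⟨∑ i, t i, ?_⟩
  rw [sum_congr rfl fun i _ => ht i]
  push_cast
  rw [sum_add_distrib, sum_add_distrib]

variable [DecidableEq ι]

open scoped Classical in
noncomputable def integralTuples (q : ι → ℕ) : Finset (ι → ℕ) :=
  (Fintype.piFinset fun i => Icc 1 (q i)).filter
    (fun a => (∀ i, (a i).Coprime (q i)) ∧ ∃ m : ℤ, ∑ i, (a i : ℚ) / (q i : ℚ) = m)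

noncomputable def mvSum (q : ι → ℕ) (G : ι → ℝ → ℂ) : ℂ :=
  ∑ a ∈ integralTuples q, ∏ i, G i ((a i : ℝ) / (q i : ℝ))

def BasicInequality (q : ι → ℕ) : Prop :=
  ∀ G : ι → ℝ → ℂ, (∀ i, Periodic (G i) 1) →
    ‖mvSum q G‖ ≤ ((univ.lcm q : ℕ) : ℝ)⁻¹ * ∏ i, √((q i : ℝ) * residueEnergy (q i) (G i))

lemma mem_integralTuples {q : ι → ℕ} {a : ι → ℕ} :
    a ∈ integralTuples q ↔
      (∀ i, a i ∈ reducedResidues (q i)) ∧ ∃ n : ℤ, ∑ i, (a i : ℚ) / q i = n := by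
  simp [integralTuples, reducedResidues, forall_and, and_assoc]

lemma crt_mem_integralTuples_iff {P m : ι → ℕ} (hP : ∀ i, 0 < P i) (hm : ∀ i, 0 < m i)
    (hPm : (univ.lcm P).Coprime (univ.lcm m)) {b c : ι → ℕ}
    (hb : ∀ i, b i ∈ reducedResidues (P i)) (hc : ∀ i, c i ∈ reducedResidues (m i)) :
    (fun i => crt (P i) (m i) (b i) (c i)) ∈ integralTuples (P * m) ↔
      b ∈ integralTuples P ∧ c ∈ integralTuples m := by
  have hmem i : crt (P i) (m i) (b i) (c i) ∈ reducedResidues (P i * m i) :=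
    crt_mem (hP i) (hm i) (coprime_of_coprime_lcm hPm (mem_univ i)) (hb i) (hc i)
  obtain ⟨t, ht⟩ := exists_int_sum_crt_div_eq hP hm b c
  simp only [mem_integralTuples, hmem, hb, hc, implies_true, true_and, Pi.mul_apply]
  rw [ht]
  constructor
  · rintro ⟨n, hn⟩
    have hsum : ∃ n : ℤ, ∑ i, (b i : ℚ) / P i + ∑ i, (c i : ℚ) / m i = n :=
      ⟨n - t, by push_cast; rw [← hn]; ring⟩
    exact ⟨exists_intCast_eq_of_add hPm ⟨_, sum_div_mul_lcm _ _ _⟩ ⟨_, sum_div_mul_lcm _ _ _⟩ hsum,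
      exists_intCast_eq_of_add hPm.symm ⟨_, sum_div_mul_lcm _ _ _⟩ ⟨_, sum_div_mul_lcm _ _ _⟩
        (hsum.imp fun _ h => (add_comm _ _).trans h)⟩
  · rintro ⟨⟨nb, hnb⟩, ⟨nc, hnc⟩⟩
    exact ⟨nb + nc + t, by rw [hnb, hnc]; push_cast; ring⟩

lemma mvSum_mul {P m : ι → ℕ} (hP : ∀ i, 0 < P i) (hm : ∀ i, 0 < m i)
    (hPm : (univ.lcm P).Coprime (univ.lcm m)) {G : ι → ℝ → ℂ} (hG : ∀ i, Periodic (G i) 1) :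
    mvSum (P * m) G = ∑ c ∈ integralTuples m, mvSum P fun i x => G i (x + c i / m i) := by
  have hbij i := crt_bijOn (hP i) (hm i) (coprime_of_coprime_lcm hPm (mem_univ i))
  have hres {q : ι → ℕ} {a : ι → ℕ} (ha : a ∈ integralTuples q) := (mem_integralTuples.1 ha).1
  simp only [mvSum]
  rw [← sum_product_right'
    (f := fun (b c : ι → ℕ) => ∏ i, G i ((b i : ℝ) / P i + (c i : ℝ) / m i))]
  refine (sum_nbij (fun x i => crt (P i) (m i) (x.1 i) (x.2 i)) ?_ ?_ ?_ ?_).symm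
  · rintro ⟨b, c⟩ hbc
    obtain ⟨hb, hc⟩ := mem_product.1 hbc
    exact (crt_mem_integralTuples_iff hP hm hPm (hres hb) (hres hc)).2 ⟨hb, hc⟩
  · rintro ⟨b, c⟩ hbc ⟨b', c'⟩ hbc' h
    obtain ⟨hb, hc⟩ := mem_product.1 hbc
    obtain ⟨hb', hc'⟩ := mem_product.1 hbc'
    have key i : (b i, c i) = (b' i, c' i) := (hbij i).injOn
      (mem_product.2 ⟨hres hb i, hres hc i⟩) (mem_product.2 ⟨hres hb' i, hres hc' i⟩) (congrFun h i)
    simp only [Prod.mk.injEq] at key ⊢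
    exact ⟨funext fun i => (key i).1, funext fun i => (key i).2⟩
  · intro a ha
    choose x hx hxa using fun i => (hbij i).surjOn (hres ha i)
    have hb i : (x i).1 ∈ reducedResidues (P i) := (mem_product.1 (hx i)).1
    have hc i : (x i).2 ∈ reducedResidues (m i) := (mem_product.1 (hx i)).2
    refine ⟨(fun i => (x i).1, fun i => (x i).2), mem_product.2 ?_, funext hxa⟩
    rw [← crt_mem_integralTuples_iff hP hm hPm hb hc]
    simp only [hxa]
    exact ha
  · rintro ⟨b, c⟩ -
    refine prod_congr rfl fun i _ => ?_
    obtain ⟨t, ht⟩ := exists_int_crt_div_eq (K := ℝ) (hP i) (hm i) (b i) (c i)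
    simp only [Pi.mul_apply]
    rw [ht]
    simpa using ((hG i).int_mul t _).symm

lemma injOn_update_integralTuples (q : ι → ℕ) (j : ι) :
    Set.InjOn (fun a => update a j 0) (integralTuples q : Set (ι → ℕ)) := by
  intro a ha a' ha' h
  have hoff : ∀ i ≠ j, a i = a' i := fun i hi => by
    simpa [update_of_ne hi] using congrFun h i
  obtain ⟨ha, n, hn⟩ := mem_integralTuples.1 ha
  obtain ⟨ha', n', hn'⟩ := mem_integralTuples.1 ha'
  have hj := (mem_filter.1 (ha j)).1
  have hj' := (mem_filter.1 (ha' j)).1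
  have hq : (q j : ℚ) ≠ 0 := Nat.cast_ne_zero.2 (by have := mem_Icc.1 hj; omega)
  have hdiff : (a j : ℚ) / q j - a' j / q j = n - n' := by
    rw [← hn, ← hn', ← add_sum_erase _ _ (mem_univ j), ← add_sum_erase _ _ (mem_univ j),
      sum_congr rfl fun i hi => by rw [hoff i (ne_of_mem_erase hi)]]
    ring
  have hmod : a' j ≡ a j [MOD q j] := Nat.modEq_iff_dvd.2 ⟨n - n', by
    field_simp at hdiff
    exact_mod_cast hdiff⟩
  funext i
  obtain rfl | hi := eq_or_ne i j
  · exact (eq_of_modEq_of_mem_Icc hj' hj hmod).symm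
  · exact hoff i hi

lemma sum_integralTuples_prod_erase_le (q : ι → ℕ) (j : ι) {f : ι → ℕ → ℝ} (hf : ∀ i b, 0 ≤ f i b) :
    ∑ a ∈ integralTuples q, ∏ i ∈ univ.erase j, f i (a i) ≤
      ∏ i ∈ univ.erase j, ∑ b ∈ reducedResidues (q i), f i b := by
  set f' : ι → ℕ → ℝ := fun i b => if i = j then 1 else f i b
  have hf' (a : ι → ℕ) : ∏ i, f' i (a i) = ∏ i ∈ univ.erase j, f i (a i) := by
    rw [← mul_prod_erase _ _ (mem_univ j)]
    simp +contextual [f', prod_congr rfl]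
  calc ∑ a ∈ integralTuples q, ∏ i ∈ univ.erase j, f i (a i)
      = ∑ a ∈ (integralTuples q).image (update · j 0), ∏ i, f' i (a i) := by
        rw [sum_image (injOn_update_integralTuples q j)]
        refine sum_congr rfl fun a _ => ?_
        rw [hf']
        exact prod_congr rfl fun i hi => by rw [update_of_ne (ne_of_mem_erase hi)]
    _ ≤ ∑ a ∈ Fintype.piFinset (update (fun i => reducedResidues (q i)) j {0}),
          ∏ i, f' i (a i) := by
        refine sum_le_sum_of_subset_of_nonneg ?_ fun a _ _ => prod_nonneg fun i _ => ?_
        · intro t ht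
          obtain ⟨a, ha, rfl⟩ := mem_image.1 ht
          refine Fintype.mem_piFinset.2 fun i => ?_
          obtain rfl | hi := eq_or_ne i j
          · simp
          · simpa [update_of_ne hi] using (mem_integralTuples.1 ha).1 i
        · unfold f'; split_ifs <;> simp [hf]
    _ = ∏ i ∈ univ.erase j, ∑ b ∈ reducedResidues (q i), f i b := by
        rw [← prod_univ_sum, ← mul_prod_erase _ _ (mem_univ j)]
        simp +contextual [f', prod_congr rfl]

lemma sum_integralTuples_apply_le {q : ι → ℕ} {i₀ j : ι} (hne : i₀ ≠ j) (f : ℕ → ℝ)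
    (hf : ∀ b, 0 ≤ f b) :
    ∑ a ∈ integralTuples q, f (a j) ≤
      (∑ b ∈ reducedResidues (q j), f b) * ∏ i ∈ (univ.erase i₀).erase j, (q i : ℝ) := by
  have hj : j ∈ univ.erase i₀ := mem_erase.2 ⟨hne.symm, mem_univ _⟩
  set f' : ι → ℕ → ℝ := fun i b => if i = j then f b else 1
  calc ∑ a ∈ integralTuples q, f (a j)
      = ∑ a ∈ integralTuples q, ∏ i ∈ univ.erase i₀, f' i (a i) := by
        simp only [f', prod_ite_eq', hj, if_true]
    _ ≤ ∏ i ∈ univ.erase i₀, ∑ b ∈ reducedResidues (q i), f' i b :=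
        sum_integralTuples_prod_erase_le q i₀ fun i b => by unfold f'; split_ifs <;> simp [hf]
    _ = (∑ b ∈ reducedResidues (q j), f b) *
          ∏ i ∈ (univ.erase i₀).erase j, (#(reducedResidues (q i)) : ℝ) := by
        rw [← mul_prod_erase _ _ hj]
        congr 1
        · simp [f']
        · exact prod_congr rfl fun i hi => by simp [f', ne_of_mem_erase hi]
    _ ≤ (∑ b ∈ reducedResidues (q j), f b) * ∏ i ∈ (univ.erase i₀).erase j, (q i : ℝ) := by
        gcongr
        · exact sum_nonneg fun b _ => hf b
        · exact_mod_cast card_reducedResidues_le _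

theorem norm_mvSum_le_of_dvd_of_dvd {q : ι → ℕ} {i₀ j₀ : ι} (hne : i₀ ≠ j₀) (hq : 0 < q i₀)
    (hi₀ : ∀ i, q i ∣ q i₀) (hj₀ : ∀ i, q i ∣ q j₀) (G : ι → ℝ → ℂ) :
    ‖mvSum q G‖ ≤ ((univ.lcm q : ℕ) : ℝ)⁻¹ * ∏ i, √((q i : ℝ) * residueEnergy (q i) (G i)) := by
  set g : ι → ℕ → ℝ := fun i b => ‖G i (b / q i)‖
  set W : ι → ℝ := fun i => residueEnergy (q i) (G i)
  set s := (univ.erase i₀).erase j₀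
  have hj₀_mem : j₀ ∈ univ.erase i₀ := mem_erase.2 ⟨hne.symm, mem_univ _⟩
  have hi₀_mem : i₀ ∈ univ.erase j₀ := mem_erase.2 ⟨hne, mem_univ _⟩
  have hW : ∀ i, 0 ≤ W i := fun i => residueEnergy_nonneg _ _
  have hlcm : univ.lcm q = q i₀ :=
    Nat.dvd_antisymm (Finset.lcm_dvd fun i _ => hi₀ i) (Finset.dvd_lcm (mem_univ _))
  have hq_eq : q j₀ = q i₀ := Nat.dvd_antisymm (hi₀ j₀) (hj₀ i₀)
  have hu : ∑ a ∈ integralTuples q, (∏ i ∈ univ.erase j₀, g i (a i)) ^ 2 ≤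
      ∏ i ∈ univ.erase j₀, W i := by
    simp only [← prod_pow]
    exact sum_integralTuples_prod_erase_le q j₀ (f := fun i b => g i b ^ 2) fun _ _ => by positivity
  have hv : ∑ a ∈ integralTuples q, g j₀ (a j₀) ^ 2 ≤ W j₀ * ∏ i ∈ s, (q i : ℝ) :=
    sum_integralTuples_apply_le hne (fun b => g j₀ b ^ 2) fun _ => by positivity
  have hWs : ∏ i ∈ univ.erase j₀, W i = W i₀ * ∏ i ∈ s, W i := by
    rw [← mul_prod_erase _ _ hi₀_mem, erase_right_comm]
  have hqW : ∏ i, (q i : ℝ) * W i = (q i₀ * W i₀) * ((q i₀ * W j₀) * ∏ i ∈ s, (q i : ℝ) * W i) := by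
    rw [← mul_prod_erase _ _ (mem_univ i₀), ← mul_prod_erase _ _ hj₀_mem, hq_eq]
  have hQ : (0 : ℝ) < q i₀ := by exact_mod_cast hq
  calc ‖mvSum q G‖ ≤ ∑ a ∈ integralTuples q, ∏ i, g i (a i) := by
        exact (norm_sum_le _ _).trans_eq (by simp only [norm_prod, g])
    _ = ∑ a ∈ integralTuples q, (∏ i ∈ univ.erase j₀, g i (a i)) * g j₀ (a j₀) := by
        simp only [prod_erase_mul _ _ (mem_univ j₀)]
    _ ≤ √(∑ a ∈ integralTuples q, (∏ i ∈ univ.erase j₀, g i (a i)) ^ 2) *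
          √(∑ a ∈ integralTuples q, g j₀ (a j₀) ^ 2) := Real.sum_mul_le_sqrt_mul_sqrt _ _ _
    _ ≤ √(∏ i ∈ univ.erase j₀, W i) * √(W j₀ * ∏ i ∈ s, (q i : ℝ)) := by gcongr
    _ = ((univ.lcm q : ℕ) : ℝ)⁻¹ * ∏ i, √((q i : ℝ) * W i) := by
        rw [← Real.sqrt_prod _ fun i _ => mul_nonneg (Nat.cast_nonneg _) (hW i), hqW, hWs, hlcm,
          ← Real.sqrt_mul (mul_nonneg (hW _) (prod_nonneg fun i _ => hW i)), prod_mul_distrib]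
        rw [show (q i₀ : ℝ) * W i₀ * (q i₀ * W j₀ * ((∏ i ∈ s, (q i : ℝ)) * ∏ i ∈ s, W i)) =
            (q i₀ : ℝ) ^ 2 * ((W i₀ * ∏ i ∈ s, W i) * (W j₀ * ∏ i ∈ s, (q i : ℝ))) by ring,
          Real.sqrt_mul (sq_nonneg _), Real.sqrt_sq hQ.le, inv_mul_cancel_left₀ hQ.ne']

lemma integralTuples_eq_empty_of_not_dvd {q : ι → ℕ} (i₀ : ι) (h : ¬ q i₀ ∣ (univ.erase i₀).lcm q) :
    integralTuples q = ∅ := by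
  refine eq_empty_of_forall_notMem fun a ha => h ?_
  obtain ⟨ha, n, hn⟩ := mem_integralTuples.1 ha
  obtain ⟨ha₀, hco⟩ := mem_filter.1 (ha i₀)
  set L := (univ.erase i₀).lcm q
  have hq : (q i₀ : ℚ) ≠ 0 := Nat.cast_ne_zero.2 (by have := mem_Icc.1 ha₀; omega)
  have hS := sum_div_mul_lcm (univ.erase i₀) a q
  set S := ∑ i ∈ univ.erase i₀, a i * (L / q i)
  have key : ((a i₀ * L : ℕ) : ℚ) = ((q i₀ * (n * L - S) : ℤ) : ℚ) := by
    rw [← add_sum_erase _ _ (mem_univ i₀)] at hn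
    push_cast
    rw [← hS, ← hn]
    field_simp
    ring
  have hdvd : (q i₀ : ℤ) ∣ ((a i₀ * L : ℕ) : ℤ) := ⟨n * L - S, by exact_mod_cast key⟩
  exact hco.symm.dvd_of_dvd_mul_left (Int.natCast_dvd_natCast.1 hdvd)

theorem basicInequality_one : BasicInequality (1 : ι → ℕ) := by
  intro G _
  have hT : integralTuples (1 : ι → ℕ) = {1} := by
    ext a
    simp only [mem_integralTuples, reducedResidues, mem_filter, Pi.one_apply, Icc_self,
      mem_singleton, Nat.coprime_one_right_eq_true, and_true, funext_iff]
    exact and_iff_left_of_imp fun h => ⟨Fintype.card ι, by simp [h]⟩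
  have hlcm : univ.lcm (1 : ι → ℕ) = 1 := Nat.dvd_one.1 (Finset.lcm_dvd fun _ _ => dvd_rfl)
  simp [mvSum, hT, hlcm, residueEnergy, reducedResidues, norm_prod]

theorem basicInequality_primePow {p : ℕ} (hp : p.Prime) (e : ι → ℕ) :
    BasicInequality fun i => p ^ e i := by
  intro G hG
  obtain hN | hN := (univ.sup e).eq_zero_or_pos
  · have h1 : (fun i => p ^ e i) = 1 := funext fun i => by
      simp [Nat.eq_zero_of_le_zero (hN ▸ le_sup (mem_univ i))]
    rw [h1]
    exact basicInequality_one G hG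
  have hne : (univ : Finset ι).Nonempty := nonempty_iff_ne_empty.2 fun h => by simp [h] at hN
  obtain ⟨i₀, -, hi₀⟩ := exists_mem_eq_sup univ hne e
  by_cases h : ∃ j₀, j₀ ≠ i₀ ∧ e j₀ = univ.sup e
  · obtain ⟨j₀, hj₀, hj₀e⟩ := h
    exact norm_mvSum_le_of_dvd_of_dvd hj₀.symm (pow_pos hp.pos _)
      (fun i => pow_dvd_pow p (hi₀ ▸ le_sup (mem_univ i)))
      (fun i => pow_dvd_pow p (hj₀e ▸ le_sup (mem_univ i))) G
  · push Not at h
    have hndvd : ¬ p ^ e i₀ ∣ (univ.erase i₀).lcm fun i => p ^ e i := fun hdvd => by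
      have hlt : (univ.erase i₀).lcm (fun i => p ^ e i) ∣ p ^ (e i₀ - 1) :=
        Finset.lcm_dvd fun i hi => pow_dvd_pow p <| by
          have := h i (ne_of_mem_erase hi)
          have := le_sup (f := e) (mem_univ i)
          omega
      have := (Nat.pow_dvd_pow_iff_le_right hp.one_lt).1 (hdvd.trans hlt)
      omega
    rw [mvSum, integralTuples_eq_empty_of_not_dvd i₀ hndvd, sum_empty, norm_zero]
    positivity

theorem BasicInequality.mul {P m : ι → ℕ} (hP : ∀ i, 0 < P i) (hm : ∀ i, 0 < m i)
    (hPm : (univ.lcm P).Coprime (univ.lcm m)) (hP' : BasicInequality P)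
    (hm' : BasicInequality m) : BasicInequality (P * m) := by
  intro G hG
  set h : ι → ℝ → ℝ := fun i x => √(residueEnergy (P i) fun y => G i (y + x))
  have h_periodic i : Periodic (fun x => (h i x : ℂ)) 1 := fun x => by
    simp only [h, ← add_assoc, hG i _]
  have h_energy i :
      residueEnergy (m i) (fun x => (h i x : ℂ)) = residueEnergy (P i * m i) (G i) := by
    rw [residueEnergy, residueEnergy, sum_reducedResidues_mul (F := fun x => ‖G i x‖ ^ 2)
      ((hG i).comp (‖·‖ ^ 2)) (hP i) (hm i) (coprime_of_coprime_lcm hPm (mem_univ i))]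
    refine sum_congr rfl fun c _ => ?_
    rw [Complex.norm_real, Real.norm_of_nonneg (Real.sqrt_nonneg _),
      Real.sq_sqrt (residueEnergy_nonneg _ _)]
    rfl
  calc ‖mvSum (P * m) G‖
      = ‖∑ c ∈ integralTuples m, mvSum P fun i x => G i (x + c i / m i)‖ := by
        rw [mvSum_mul hP hm hPm hG]
    _ ≤ ∑ c ∈ integralTuples m, ((univ.lcm P : ℕ) : ℝ)⁻¹ *
          ∏ i, √((P i : ℝ) * residueEnergy (P i) fun x => G i (x + c i / m i)) :=
        norm_sum_le_of_le _ fun c _ => hP' _ fun i => (hG i).add_const _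
    _ = ((univ.lcm P : ℕ) : ℝ)⁻¹ * (∏ i, √(P i : ℝ)) *
          ∑ c ∈ integralTuples m, ∏ i, h i (c i / m i) := by
        rw [mul_sum]
        refine sum_congr rfl fun c _ => ?_
        rw [mul_assoc, ← prod_mul_distrib]
        simp only [h, Real.sqrt_mul (Nat.cast_nonneg _)]
    _ ≤ ((univ.lcm P : ℕ) : ℝ)⁻¹ * (∏ i, √(P i : ℝ)) * ‖mvSum m fun i x => (h i x : ℂ)‖ := by
        gcongr
        simp only [mvSum, ← Complex.ofReal_prod, ← Complex.ofReal_sum, Complex.norm_real]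
        exact Real.le_norm_self _
    _ ≤ ((univ.lcm P : ℕ) : ℝ)⁻¹ * (∏ i, √(P i : ℝ)) * (((univ.lcm m : ℕ) : ℝ)⁻¹ *
          ∏ i, √((m i : ℝ) * residueEnergy (m i) fun x => (h i x : ℂ))) := by
        gcongr
        exact hm' _ h_periodic
    _ = ((univ.lcm (P * m) : ℕ) : ℝ)⁻¹ *
          ∏ i, √(((P * m) i : ℕ) * residueEnergy ((P * m) i) (G i)) := by
        simp only [h_energy, lcm_mul_of_coprime _ hPm, Pi.mul_apply, Nat.cast_mul, mul_assoc,
          Real.sqrt_mul (Nat.cast_nonneg (P _)), prod_mul_distrib, mul_inv]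
        ring

theorem basicInequality {q : ι → ℕ} (hq : ∀ i, 0 < q i) : BasicInequality q := by
  induction hQ : univ.lcm q using Nat.strong_induction_on generalizing q with
  | _ Q ih =>
  obtain rfl | hQ1 := eq_or_ne Q 1
  · rw [show q = 1 from funext fun i => Nat.dvd_one.1 (hQ ▸ Finset.dvd_lcm (mem_univ i))]
    exact basicInequality_one
  set p := Q.minFac
  have hp : p.Prime := Nat.minFac_prime hQ1
  set m : ι → ℕ := fun i => q i / p ^ (q i).factorization p
  have hm i : 0 < m i := Nat.ordCompl_pos p (hq i).ne'
  have hpm : p.Coprime (univ.lcm m) := Nat.Coprime.coprime_dvd_right (lcm_dvd_prod _ _)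
    (Nat.Coprime.prod_right fun i _ => Nat.coprime_ordCompl hp (hq i).ne')
  have hlt : univ.lcm m < Q := by
    have hQ0 : 0 < Q := Nat.pos_of_ne_zero <| hQ ▸ (Finset.lcm_ne_zero_iff.2 fun i _ => (hq i).ne')
    have hdvd : univ.lcm m ∣ Q :=
      Finset.lcm_dvd fun i _ => (Nat.ordCompl_dvd _ _).trans (hQ ▸ Finset.dvd_lcm (mem_univ i))
    refine lt_of_le_of_ne (Nat.le_of_dvd hQ0 hdvd) fun heq => hp.one_lt.ne' ?_
    exact Nat.Coprime.eq_one_of_dvd hpm (heq ▸ Nat.minFac_dvd Q)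
  have hsplit : q = (fun i => p ^ (q i).factorization p) * m :=
    funext fun i => (Nat.ordProj_mul_ordCompl_eq_self (q i) p).symm
  rw [hsplit]
  refine (basicInequality_primePow hp _).mul (fun i => pow_pos hp.pos _) hm ?_ (ih _ hlt hm rfl)
  refine Nat.Coprime.coprime_dvd_left ((lcm_dvd_prod _ _).trans ?_)
    (hpm.pow_left (∑ i, (q i).factorization p))
  rw [prod_pow_eq_pow_sum]

end MontgomeryVaughan

open scoped Classical in
theorem statement7_general (k : ℕ) (q : Fin k → ℕ) (hq : ∀ i, 0 < q i)
    (G : Fin k → ℝ → ℂ) (hG : ∀ i x, G i (x + 1) = G i x) :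
    ‖(∑ a ∈ (Fintype.piFinset fun i => Finset.Icc 1 (q i)).filter
        (fun a : (i : Fin k) → ℕ =>
          (∀ i, Nat.Coprime (a i) (q i)) ∧ ∃ m : ℤ, (∑ i, (a i : ℚ) / (q i : ℚ)) = (m : ℚ)),
        ∏ i, G i ((a i : ℝ) / (q i : ℝ)))‖
      ≤ ((((Finset.univ : Finset (Fin k)).lcm q : ℕ) : ℝ))⁻¹ *
          ∏ i, Real.sqrt ((q i : ℝ) *
            ∑ b ∈ (Finset.Icc 1 (q i)).filter (fun b => Nat.Coprime b (q i)),
              ‖G i ((b : ℝ) / (q i : ℝ))‖ ^ 2) := by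
  have h := MontgomeryVaughan.basicInequality hq G hG
  unfold MontgomeryVaughan.mvSum MontgomeryVaughan.integralTuples MontgomeryVaughan.residueEnergy
    MontgomeryVaughan.reducedResidues at h
  -- the filter here decides `∀ i : Fin k` by `Nat.decidableForallFin`, not by the generic instance
  convert h

open scoped Classical in
/-- Montgomery–Vaughan basic inequality. -/
theorem statement7 (k : ℕ) (hk : 2 ≤ k) (q : Fin k → ℕ) (hq : ∀ i, 0 < q i)
    (G : Fin k → ℝ → ℂ) (hG : ∀ i x, G i (x + 1) = G i x) :
    ‖(∑ a ∈ (Fintype.piFinset fun i => Finset.Icc 1 (q i)).filter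
        (fun a : (i : Fin k) → ℕ =>
          (∀ i, Nat.Coprime (a i) (q i)) ∧ ∃ m : ℤ, (∑ i, (a i : ℚ) / (q i : ℚ)) = (m : ℚ)),
        ∏ i, G i ((a i : ℝ) / (q i : ℝ)))‖
      ≤ ((((Finset.univ : Finset (Fin k)).lcm q : ℕ) : ℝ))⁻¹ *
          ∏ i, Real.sqrt ((q i : ℝ) *
            ∑ b ∈ (Finset.Icc 1 (q i)).filter (fun b => Nat.Coprime b (q i)),
              ‖G i ((b : ℝ) / (q i : ℝ))‖ ^ 2) :=
  statement7_general k q hq G hG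
end

section
/- For a prime p \equiv 3 mod 4 and a finite set D of integers with |D| = k and all elements smaller than p, the local density \delta_D(p) := lim_{\alpha \to \infty} p^{-\alpha} #\{0 \le a < p^\alpha : a + d is a sum of two squares mod p^\alpha for all d \in D\} satisfies \delta_D(p) = (1 + 1/p)^{-1}(1 - (k-1)/p) when the elements of D are pairwise incongruent mod p, i.e. \delta_D(p)/\delta_{\{0\}}(p)^k = (1+1/p)^{k-1}(1 - (k-1)/p). -/
/-!
For `p ≡ 3 (mod 4)` every residue prime to `p` is a sum of two squares modulo `p ^ α`, while
`p ∣ x ^ 2 + y ^ 2` forces `p ∣ x` and `p ∣ y`. Hence modulo `p ^ (α + 2)` the residues `p * u`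
with `p ∤ u` are never sums of two squares, and `p ^ 2 * t` is one exactly when `t` is one modulo
`p ^ α`. The number `B α` of residues modulo `p ^ α` that are not sums of two squares therefore
satisfies `B (α + 2) = B α + p ^ (α + 1) - p ^ α`, that is `(p + 1) B α = p ^ α - p ^ (α % 2)`.

All these exceptional residues are divisible by `p`, so for shifts `d ∈ D` that are pairwise
incongruent modulo `p` the sets `{a | a + d is not a sum of two squares}` are disjoint, and by
periodicity each has `B α` elements. The count in question is thus `p ^ α - k B α`, and its density
tends to `1 - k / (p + 1)`.
-/

open Finset Filter Topology Function
open scoped Classical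

theorem sum_range_add_of_periodic {M : Type*} [AddCancelCommMonoid M] {f : ℤ → M} {N : ℕ}
    (hf : Periodic f N) (d : ℤ) : ∑ a ∈ range N, f (a + d) = ∑ a ∈ range N, f a := by
  have step : ∀ d : ℤ, ∑ a ∈ range N, f (a + (d + 1)) = ∑ a ∈ range N, f (a + d) := by
    intro d
    have h := (sum_range_succ' (fun a : ℕ => f (a + d)) N).symm.trans (sum_range_succ _ N)
    rw [Nat.cast_zero, zero_add, add_comm (N : ℤ), hf d] at h
    simpa only [Nat.cast_succ, add_assoc, add_comm (1 : ℤ)] using add_right_cancel h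
  induction d using Int.induction_on with
  | zero => simp
  | succ i ih => rw [step, ih]
  | pred i ih => rw [← ih, ← step, sub_add_cancel]

theorem card_filter_range_add_of_periodic {P : ℤ → Prop} [DecidablePred P] {N : ℕ}
    (hP : Periodic P N) (d : ℤ) : #{a ∈ range N | P (↑a + d)} = #{a ∈ range N | P (a : ℕ)} := by
  simp only [card_filter]
  exact sum_range_add_of_periodic (f := fun a => if P a then 1 else 0) (N := N)
    (fun a => by simp only [hP a]) d

theorem card_filter_forall_add_add_card_mul {P : ℤ → Prop} [DecidablePred P] {N : ℕ}
    (hP : Periodic P N) (D : Finset ℤ)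
    (hD : ∀ d₁ ∈ D, ∀ d₂ ∈ D, d₁ ≠ d₂ → ∀ a : ℤ, ¬P (a + d₁) → P (a + d₂)) :
    #{a ∈ range N | ∀ d ∈ D, P (↑a + d)} + #D * #{a ∈ range N | ¬P (a : ℕ)} = N := by
  set bad : ℤ → Finset ℕ := fun d => {a ∈ range N | ¬P (↑a + d)}
  have hgood : {a ∈ range N | ∀ d ∈ D, P (↑a + d)} = range N \ D.biUnion bad := by
    ext a
    simp only [bad, mem_filter, Finset.mem_sdiff, mem_biUnion]
    grind
  have hbad : #(D.biUnion bad) = #D * #{a ∈ range N | ¬P (a : ℕ)} := by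
    rw [card_biUnion]
    · exact sum_const_nat fun d _ =>
        card_filter_range_add_of_periodic (P := fun a => ¬P a) (fun a => by simp only [hP a]) d
    · intro d₁ h₁ d₂ h₂ hne
      exact disjoint_left.mpr fun a ha₁ ha₂ =>
        (mem_filter.mp ha₂).2 (hD d₁ h₁ d₂ h₂ hne a (mem_filter.mp ha₁).2)
  rw [hgood, ← hbad, card_sdiff_add_card_eq_card (biUnion_subset.mpr fun _ _ => filter_subset _ _),
    card_range]

theorem card_filter_range_mul {P : ℕ → Prop} [DecidablePred P] {p : ℕ} (hp : p ≠ 0) (M : ℕ)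
    (hP : ∀ r, P r → p ∣ r) : #{r ∈ range (p * M) | P r} = #{s ∈ range M | P (p * s)} := by
  rw [← card_image_of_injective {s ∈ range M | P (p * s)} (mul_right_injective₀ hp)]
  congr 1
  ext r
  simp only [mem_filter, mem_range, mem_image]
  constructor
  · rintro ⟨hr, hPr⟩
    obtain ⟨s, rfl⟩ := hP r hPr
    exact ⟨s, ⟨lt_of_mul_lt_mul_left hr (Nat.zero_le p), hPr⟩, rfl⟩
  · rintro ⟨s, ⟨hs, hPs⟩, rfl⟩
    exact ⟨Nat.mul_lt_mul_of_pos_left hs (Nat.pos_of_ne_zero hp), hPs⟩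

/-- The left-hand side is how `Finset.range n`, coerced to `Finset ℤ`, elaborates. -/
theorem card_filter_bind_natCast (s : Finset ℕ) (P : ℤ → Prop) [DecidablePred P] :
    #{a ∈ s >>= fun a => pure (a : ℤ) | P a} = #{a ∈ s | P (a : ℕ)} := by
  rw [bind_pure_comp, fmap_def, ← card_image_of_injective _ (Nat.cast_injective (R := ℤ))]
  congr 1
  ext a
  simp only [mem_filter, mem_image]
  grind

theorem dvd_of_pow_succ_dvd_mul_sub {R : Type*} [CommRing R] {a s n : R} {α : ℕ}
    (h : a ^ (α + 1) ∣ a * s - n) : a ∣ n :=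
  (dvd_sub_right (dvd_mul_right _ _)).mp ((dvd_pow_self _ α.succ_ne_zero).trans h)

theorem tendsto_pow_mod_two_div_pow {x : ℝ} (hx : 1 < x) :
    Tendsto (fun α : ℕ => x ^ (α % 2) / x ^ α) atTop (𝓝 0) := by
  have hx0 : 0 < x := one_pos.trans hx
  refine squeeze_zero (fun α => by positivity) (fun α => ?_)
    (by simpa using (tendsto_pow_atTop_nhds_zero_of_lt_one (inv_nonneg.mpr hx0.le)
      (inv_lt_one_of_one_lt₀ hx)).const_mul x)
  rw [div_eq_mul_inv, ← inv_pow]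
  gcongr
  calc x ^ (α % 2) ≤ x ^ 1 := pow_le_pow_right₀ hx.le (by omega)
    _ = x := pow_one x

def IsSumTwoSqMod (m n : ℤ) : Prop := ∃ x y : ℤ, m ∣ n - (x ^ 2 + y ^ 2)

namespace IsSumTwoSqMod

theorem of_modEq {m n n' : ℤ} (h : n ≡ n' [ZMOD m]) (hn : IsSumTwoSqMod m n) :
    IsSumTwoSqMod m n' := by
  obtain ⟨x, y, hxy⟩ := hn
  exact ⟨x, y, by simpa using h.dvd.add hxy⟩

theorem periodic (m : ℤ) : Periodic (IsSumTwoSqMod m) m := fun _ =>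
  propext ⟨of_modEq (Int.add_modEq_right ..), of_modEq (Int.add_modEq_right ..).symm⟩

theorem of_dvd {m n : ℤ} (h : m ∣ n) : IsSumTwoSqMod m n := ⟨0, 0, by simpa using h⟩

/-- Dirichlet supplies a prime `q ≡ 1 [MOD 4]` with `q ≡ n [ZMOD m]`, and Fermat writes `q`
as a sum of two squares. -/
theorem of_isCoprime {m : ℕ} {n : ℤ} (hm : Odd m) (hn : IsCoprime (m : ℤ) n) :
    IsSumTwoSqMod m n := by
  have h4 : Nat.Coprime 4 m := Nat.Coprime.pow_left 2 (Nat.coprime_two_left.mpr hm)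
  have : NeZero (4 * m) := ⟨by have := hm.pos; omega⟩
  set crt := ZMod.chineseRemainder h4
  have hunit : IsUnit (crt.symm (1, n)) :=
    (Prod.isUnit_iff.mpr ⟨isUnit_one, (ZMod.coe_int_isUnit_iff_isCoprime n m).mpr hn⟩).map _
  obtain ⟨q, -, hq, hqa⟩ := Nat.forall_exists_prime_gt_and_eq_mod hunit 0
  have hcrt : ((q : ZMod 4), (q : ZMod m)) = ((1 : ZMod 4), (n : ZMod m)) := by
    rw [← crt.apply_symm_apply (1, n), ← hqa, map_natCast]
    rfl
  simp only [Prod.mk.injEq] at hcrt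
  have hq4 : q % 4 = 1 := by
    simpa using (ZMod.natCast_eq_natCast_iff' q 1 4).mp (by simpa using hcrt.1)
  have : Fact q.Prime := ⟨hq⟩
  obtain ⟨x, y, hxy⟩ := Nat.Prime.sq_add_sq (p := q) (by omega)
  refine ⟨x, y, (ZMod.intCast_eq_intCast_iff_dvd_sub _ _ _).mp ?_⟩
  rw [← hcrt.2, ← hxy]
  push_cast
  rfl

end IsSumTwoSqMod

section PrimePow

variable {p : ℕ} [hp : Fact p.Prime]

theorem Int.dvd_right_of_dvd_sq_add_sq (hp4 : p % 4 = 3) {x y : ℤ}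
    (h : (p : ℤ) ∣ x ^ 2 + y ^ 2) : (p : ℤ) ∣ y := by
  rw [← ZMod.intCast_zmod_eq_zero_iff_dvd] at h ⊢
  by_contra hy
  push_cast at h
  exact ZMod.mod_four_ne_three_of_sq_eq_neg_sq' hy (eq_neg_of_add_eq_zero_left h) hp4

theorem Int.exists_sq_add_sq_eq_sq_mul (hp4 : p % 4 = 3) {x y : ℤ}
    (h : (p : ℤ) ∣ x ^ 2 + y ^ 2) : ∃ x' y' : ℤ, x ^ 2 + y ^ 2 = p ^ 2 * (x' ^ 2 + y' ^ 2) := by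
  obtain ⟨x', rfl⟩ := Int.dvd_right_of_dvd_sq_add_sq hp4 (add_comm (x ^ 2) _ ▸ h)
  obtain ⟨y', rfl⟩ := Int.dvd_right_of_dvd_sq_add_sq hp4 h
  exact ⟨x', y', by ring⟩

theorem dvd_of_not_isSumTwoSqMod_pow (hp_odd : Odd p) {α : ℕ} {n : ℤ}
    (h : ¬IsSumTwoSqMod ((p : ℤ) ^ α) n) : (p : ℤ) ∣ n := by
  by_contra hn
  have hcop : IsCoprime (p : ℤ) n :=
    (Prime.coprime_iff_not_dvd (Nat.prime_iff_prime_int.mp hp.out)).mpr hn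
  have hrep := IsSumTwoSqMod.of_isCoprime (hp_odd.pow (n := α)) (by exact_mod_cast hcop.pow_left)
  exact h (by exact_mod_cast hrep)

theorem not_isSumTwoSqMod_pow_add_two_mul (hp4 : p % 4 = 3) (α : ℕ) {u : ℤ}
    (hu : ¬(p : ℤ) ∣ u) : ¬IsSumTwoSqMod ((p : ℤ) ^ (α + 2)) (p * u) := by
  have hp0 : (p : ℤ) ≠ 0 := by exact_mod_cast hp.out.ne_zero
  rintro ⟨x, y, h⟩
  obtain ⟨x', y', hxy⟩ := Int.exists_sq_add_sq_eq_sq_mul hp4 (dvd_of_pow_succ_dvd_mul_sub h)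
  have : (p : ℤ) ^ 2 ∣ p * u := by
    have := (pow_dvd_pow (p : ℤ) (by omega : 2 ≤ α + 2)).trans h
    rw [hxy] at this
    exact (dvd_sub_left (dvd_mul_right _ _)).mp this
  exact hu ((mul_dvd_mul_iff_left hp0).mp (by rwa [← sq]))

theorem isSumTwoSqMod_pow_add_two_sq_mul_iff (hp4 : p % 4 = 3) (α : ℕ) (t : ℤ) :
    IsSumTwoSqMod ((p : ℤ) ^ (α + 2)) (p ^ 2 * t) ↔ IsSumTwoSqMod ((p : ℤ) ^ α) t := by
  have hp2 : (p : ℤ) ^ 2 ≠ 0 := by exact_mod_cast pow_ne_zero 2 hp.out.ne_zero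
  constructor
  · rintro ⟨x, y, h⟩
    obtain ⟨x', y', hxy⟩ := Int.exists_sq_add_sq_eq_sq_mul hp4
      (dvd_of_pow_succ_dvd_mul_sub (α := α + 1) (s := p * t) (by rwa [← mul_assoc, ← sq]))
    refine ⟨x', y', (mul_dvd_mul_iff_right hp2).mp ?_⟩
    rwa [← pow_add, sub_mul, mul_comm t, mul_comm (_ + _), ← hxy]
  · rintro ⟨x, y, h⟩
    refine ⟨p * x, p * y, ?_⟩
    have := mul_dvd_mul_left ((p : ℤ) ^ 2) h
    rw [← pow_add, add_comm] at this
    rwa [show (p : ℤ) ^ 2 * t - ((p * x) ^ 2 + (p * y) ^ 2) = p ^ 2 * (t - (x ^ 2 + y ^ 2)) by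
      ring]

end PrimePow

noncomputable def numNonSumTwoSq (p α : ℕ) : ℕ :=
  #{r ∈ range (p ^ α) | ¬IsSumTwoSqMod ((p : ℤ) ^ α) (r : ℕ)}

section PrimePowCount

variable {p : ℕ} [hp : Fact p.Prime]

theorem numNonSumTwoSq_add_two (hp4 : p % 4 = 3) (α : ℕ) :
    numNonSumTwoSq p (α + 2) + p ^ α = numNonSumTwoSq p α + p ^ (α + 1) := by
  have hp0 : p ≠ 0 := hp.out.ne_zero
  have hp_odd : Odd p := Nat.odd_iff.mpr (by omega)
  have hsplit : numNonSumTwoSq p (α + 2)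
      = #{s ∈ range (p ^ (α + 1)) | p ∣ s ∧ ¬IsSumTwoSqMod ((p : ℤ) ^ (α + 2)) (p * s : ℕ)}
        + #{s ∈ range (p ^ (α + 1)) | ¬p ∣ s} := by
    rw [numNonSumTwoSq, pow_succ' p (α + 1), card_filter_range_mul hp0 _
      fun r h => by exact_mod_cast dvd_of_not_isSumTwoSqMod_pow hp_odd h,
      ← card_filter_add_card_filter_not (p := (p ∣ ·)), filter_filter, filter_filter]
    congr 2
    · exact filter_congr fun _ _ => and_comm
    · refine filter_congr fun s _ => and_iff_right_of_imp fun hs => ?_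
      push_cast
      exact not_isSumTwoSqMod_pow_add_two_mul hp4 α (by exact_mod_cast hs)
  have hsq : #{s ∈ range (p ^ (α + 1)) | p ∣ s ∧ ¬IsSumTwoSqMod ((p : ℤ) ^ (α + 2)) (p * s : ℕ)}
      = numNonSumTwoSq p α := by
    rw [pow_succ' p α, card_filter_range_mul hp0 _ fun _ h => h.1, numNonSumTwoSq]
    congr! 2 with t
    simp only [dvd_mul_right, true_and, Nat.cast_mul, Nat.cast_pow, ← mul_assoc, ← sq]
    rw [isSumTwoSqMod_pow_add_two_sq_mul_iff hp4]
  have hunits : #{s ∈ range (p ^ (α + 1)) | ¬p ∣ s} + p ^ α = p ^ (α + 1) := by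
    have hmult : #{s ∈ range (p ^ (α + 1)) | p ∣ s} = p ^ α := by
      rw [pow_succ' p α, card_filter_range_mul hp0 _ fun _ h => h]
      simp
    rw [← hmult, add_comm, card_filter_add_card_filter_not, card_range]
  omega

theorem numNonSumTwoSq_eq (hp4 : p % 4 = 3) (α : ℕ) :
    (p + 1) * numNonSumTwoSq p α + p ^ (α % 2) = p ^ α := by
  induction α using Nat.twoStepInduction with
  | zero => simp [numNonSumTwoSq, IsSumTwoSqMod.of_dvd]
  | one =>
    suffices numNonSumTwoSq p 1 = 0 by simp [this]
    refine card_eq_zero.mpr (filter_eq_empty_iff.mpr fun r hr hrep => ?_)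
    have hpr : p ∣ r := by
      exact_mod_cast dvd_of_not_isSumTwoSqMod_pow (Nat.odd_iff.mpr (by omega)) hrep
    obtain rfl : r = 0 := Nat.eq_zero_of_dvd_of_lt hpr (by simpa using hr)
    exact hrep (IsSumTwoSqMod.of_dvd (dvd_zero _))
  | more α ih _ =>
    have hrec := numNonSumTwoSq_add_two hp4 α
    rw [Nat.add_mod_right]
    zify at ih hrec ⊢
    linear_combination (↑p + 1 : ℤ) * hrec + ih

theorem card_filter_forall_isSumTwoSqMod (hp4 : p % 4 = 3) (D : Finset ℤ)
    (hD : ∀ d₁ ∈ D, ∀ d₂ ∈ D, d₁ ≠ d₂ → ¬(p : ℤ) ∣ d₁ - d₂) (α : ℕ) :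
    #{a ∈ range (p ^ α) | ∀ d ∈ D, IsSumTwoSqMod ((p : ℤ) ^ α) (↑a + d)}
      + #D * numNonSumTwoSq p α = p ^ α := by
  have hp_odd : Odd p := Nat.odd_iff.mpr (by omega)
  exact card_filter_forall_add_add_card_mul (P := IsSumTwoSqMod ((p : ℤ) ^ α))
    (N := p ^ α) (by exact_mod_cast IsSumTwoSqMod.periodic _) D
    fun d₁ h₁ d₂ h₂ hne a h₁' => by_contra fun h₂' => hD d₁ h₁ d₂ h₂ hne <| by
      simpa using (dvd_of_not_isSumTwoSqMod_pow hp_odd h₁').sub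
        (dvd_of_not_isSumTwoSqMod_pow hp_odd h₂')

theorem card_filter_forall_isSumTwoSqMod_div_pow (hp4 : p % 4 = 3) (D : Finset ℤ)
    (hD : ∀ d₁ ∈ D, ∀ d₂ ∈ D, d₁ ≠ d₂ → ¬(p : ℤ) ∣ d₁ - d₂) (α : ℕ) :
    (#{a ∈ range (p ^ α) | ∀ d ∈ D, IsSumTwoSqMod ((p : ℤ) ^ α) (↑a + d)} : ℝ) / p ^ α
      = 1 - #D / (p + 1) + #D / (p + 1) * ((p : ℝ) ^ (α % 2) / p ^ α) := by
  have hcount : (#{a ∈ range (p ^ α) | ∀ d ∈ D, IsSumTwoSqMod ((p : ℤ) ^ α) (↑a + d)} : ℝ)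
      + #D * numNonSumTwoSq p α = p ^ α := by
    exact_mod_cast card_filter_forall_isSumTwoSqMod hp4 D hD α
  have hnon : ((p : ℝ) + 1) * numNonSumTwoSq p α + p ^ (α % 2) = p ^ α := by
    exact_mod_cast numNonSumTwoSq_eq hp4 α
  have hp0 : (p : ℝ) ≠ 0 := by exact_mod_cast hp.out.ne_zero
  field_simp
  linear_combination ((p : ℝ) + 1) * hcount - #D * hnon

end PrimePowCount

open scoped Classical in
theorem statement10_general (p : ℕ) (hp : p.Prime) (hp4 : p % 4 = 3)
    (D : Finset ℤ) (k : ℕ) (hk : D.card = k)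
    (hdist : ∀ d₁ ∈ D, ∀ d₂ ∈ D, d₁ ≠ d₂ → ¬ ((p : ℤ) ∣ d₁ - d₂)) :
    Filter.Tendsto
      (fun α : ℕ =>
        (((Finset.range (p ^ α)).filter
            (fun a => ∀ d ∈ D, ∃ x y : ℤ,
              (p : ℤ) ^ α ∣ (a : ℤ) + d - (x ^ 2 + y ^ 2))).card : ℝ) / (p ^ α : ℝ))
      Filter.atTop
      (nhds ((1 + 1 / (p : ℝ))⁻¹ * (1 - ((k : ℝ) - 1) / (p : ℝ)))) := by
  have : Fact p.Prime := ⟨hp⟩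
  have hp1 : (1 : ℝ) < p := by exact_mod_cast hp.one_lt
  have hlimit : (1 + 1 / (p : ℝ))⁻¹ * (1 - ((k : ℝ) - 1) / p) = 1 - k / (p + 1) + k / (p + 1) * 0 := by
    field_simp
    ring
  simp only [card_filter_bind_natCast, ← hk] at hlimit ⊢
  rw [hlimit]
  refine Tendsto.congr (fun α => (card_filter_forall_isSumTwoSqMod_div_pow hp4 D hdist α).symm) ?_
  exact tendsto_const_nhds.add ((tendsto_pow_mod_two_div_pow hp1).const_mul _)

open scoped Classical in
/-- For a prime `p ≡ 3 (4)` and a set `D` of `k` integers, all smaller than `p` and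
pairwise incongruent mod `p`, the local density of simultaneous sums of two squares
satisfies `δ_D(p) = (1+1/p)⁻¹ (1-(k-1)/p)`. -/
theorem statement10 (p : ℕ) (hp : p.Prime) (hp4 : p % 4 = 3)
    (D : Finset ℤ) (k : ℕ) (hk : D.card = k)
    (hlt : ∀ d ∈ D, d < (p : ℤ))
    (hdist : ∀ d₁ ∈ D, ∀ d₂ ∈ D, d₁ ≠ d₂ → ¬ ((p : ℤ) ∣ d₁ - d₂)) :
    Filter.Tendsto
      (fun α : ℕ =>
        (((Finset.range (p ^ α)).filter
            (fun a => ∀ d ∈ D, ∃ x y : ℤ,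
              (p : ℤ) ^ α ∣ (a : ℤ) + d - (x ^ 2 + y ^ 2))).card : ℝ) / (p ^ α : ℝ))
      Filter.atTop
      (nhds ((1 + 1 / (p : ℝ))⁻¹ * (1 - ((k : ℝ) - 1) / (p : ℝ)))) :=
  statement10_general p hp hp4 D k hk hdist
end

section
/- For a prime q \equiv 1 mod 4, a set H of integers with max element h < y, and with P_y = \prod_{p \le y, p \not\equiv 1 (4)} p, the tail of the singular series Euler product satisfies \prod_{p > y, p \not\equiv 1 (4)} \delta_H(p)/\delta_{\{0\}}(p)^{|H|} = \prod_{p > y, p \equiv 3 (4)} (1 + 1/p)^{k-1}(1 - (k-1)/p) = 1 + O_k(1/(y \log y)), where k = |H|. -/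
/-!
For `p ≥ k - 1` the local ratio `(1 + 1/p)^(k-1) (1 - (k-1)/p)` lies in `[1 - (k-1)²/p², 1]`,
so when `y ≥ k - 1` every finite partial product differs from `1` by at most
`(k-1)² ∑_{p > y} p⁻²`. Chebyshev's bound `∏_{p ≤ n} p ≤ 4ⁿ` gives
`#{y < p ≤ n} ≤ n log 4 / log y`, and partial summation turns this into
`∑_{p > y} p⁻² ≤ 2 log 4 / (y log y)`. When `y < k - 1` the factors with `p < k - 1` are not
controlled this way, but their number and size depend only on `k`, and `y log y < (k-1)²`.
-/

open Finset Real

-- `localRatio (k - 1) p = δ_H(p) / δ_{0}(p)^k` for `|H| = k`.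
noncomputable def localRatio (m p : ℕ) : ℝ := (1 + (p : ℝ)⁻¹) ^ m * (1 - m * (p : ℝ)⁻¹)

lemma one_add_pow_mul_one_sub_le_one (m : ℕ) {x : ℝ} (hx : -1 ≤ x) :
    (1 + x) ^ m * (1 - m * x) ≤ 1 := by
  induction m with
  | zero => simp
  | succ m ih =>
    have hstep : (1 + x) ^ (m + 1) * (1 - ↑(m + 1) * x)
        = (1 + x) ^ m * (1 - m * x) - (m + 1) * x ^ 2 * (1 + x) ^ m := by
      push_cast; ring
    have : 0 ≤ (m + 1) * x ^ 2 * (1 + x) ^ m := by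
      have : 0 ≤ 1 + x := by linarith
      positivity
    linarith

lemma one_sub_sq_le_one_add_pow_mul (m : ℕ) {x : ℝ} (hx : -2 ≤ x) (hmx : m * x ≤ 1) :
    1 - (m * x) ^ 2 ≤ (1 + x) ^ m * (1 - m * x) :=
  calc 1 - (m * x) ^ 2 = (1 + m * x) * (1 - m * x) := by ring
    _ ≤ (1 + x) ^ m * (1 - m * x) :=
      mul_le_mul_of_nonneg_right (one_add_mul_le_pow hx m) (sub_nonneg.2 hmx)

lemma abs_one_add_pow_mul_le (m : ℕ) {x : ℝ} (hx₀ : 0 ≤ x) (hx₁ : x ≤ 1) :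
    |(1 + x) ^ m * (1 - m * x)| ≤ 2 ^ m * (m + 1) := by
  have hmx : m * x ≤ m := mul_le_of_le_one_right m.cast_nonneg hx₁
  rw [abs_mul, abs_of_nonneg (by positivity : (0 : ℝ) ≤ (1 + x) ^ m)]
  gcongr
  · linarith
  · rw [abs_le]
    constructor <;> nlinarith [m.cast_nonneg (α := ℝ)]

lemma one_sub_sum_le_prod {ι : Type*} (s : Finset ι) {f : ι → ℝ} (h₀ : ∀ i ∈ s, 0 ≤ f i)
    (h₁ : ∀ i ∈ s, f i ≤ 1) : 1 - ∑ i ∈ s, (1 - f i) ≤ ∏ i ∈ s, f i := by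
  induction s using Finset.cons_induction with
  | empty => simp
  | cons a s ha ih =>
    simp only [mem_cons, forall_eq_or_imp] at h₀ h₁
    rw [prod_cons, sum_cons]
    have hprod : ∏ i ∈ s, f i ≤ 1 := prod_le_one h₀.2 h₁.2
    nlinarith [ih h₀.2 h₁.2, h₀.1, h₁.1]

lemma abs_prod_sub_one_le_sum {ι : Type*} (s : Finset ι) {f : ι → ℝ} (h₀ : ∀ i ∈ s, 0 ≤ f i)
    (h₁ : ∀ i ∈ s, f i ≤ 1) : |∏ i ∈ s, f i - 1| ≤ ∑ i ∈ s, (1 - f i) := by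
  rw [abs_sub_comm, abs_of_nonneg (sub_nonneg.2 (prod_le_one h₀ h₁))]
  linarith [one_sub_sum_le_prod s h₀ h₁]

lemma abs_tprod_sub_one_le {ι : Type*} {f : ι → ℝ} {B : ℝ} (hB : 0 ≤ B)
    (h : ∀ s : Finset ι, |∏ i ∈ s, f i - 1| ≤ B) : |∏' i, f i - 1| ≤ B := by
  by_cases hf : Multipliable f
  · exact le_of_tendsto' (hf.hasProd.sub_const 1).abs h
  · simpa [tprod_eq_one_of_not_multipliable hf] using hB

lemma sum_Ico_sub_succ {M : Type*} [AddCommGroup M] (f : ℕ → M) {a b : ℕ} (hab : a ≤ b) :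
    ∑ i ∈ Ico a b, (f i - f (i + 1)) = f a - f b :=
  calc ∑ i ∈ Ico a b, (f i - f (i + 1)) = -∑ i ∈ Ico a b, (f (i + 1) - f i) := by
        rw [← sum_neg_distrib]; simp only [neg_sub]
    _ = f a - f b := by rw [sum_Ico_sub f hab, neg_sub]

lemma pow_card_le_four_pow {t : Finset ℕ} {m n : ℕ} (ht : ∀ p ∈ t, p.Prime ∧ m < p ∧ p ≤ n) :
    (m + 1) ^ #t ≤ 4 ^ n :=
  calc (m + 1) ^ #t ≤ ∏ p ∈ t, p := pow_card_le_prod t id (m + 1) fun p hp => (ht p hp).2.1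
    _ ≤ primorial n := by
      refine prod_le_prod_of_subset_of_one_le' (fun p hp => ?_) fun p hp _ => ?_
      · simp only [mem_filter, mem_range]
        exact ⟨Nat.lt_succ_of_le (ht p hp).2.2, (ht p hp).1⟩
      · exact (mem_filter.1 hp).2.one_lt.le
    _ ≤ 4 ^ n := primorial_le_four_pow n

-- Partial summation: write `1/p² = 1/N² + ∑_{p ≤ i < N} (1/i² - 1/(i+1)²)`, swap the sums, and
-- use `i (1/i² - 1/(i+1)²) ≤ 2 (1/i - 1/(i+1))`, which telescopes.
lemma sum_inv_sq_le_of_card_le {s : Finset ℕ} {m : ℕ} {A : ℝ} (hs : ∀ p ∈ s, m < p)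
    (hcount : ∀ n : ℕ, (#{p ∈ s | p ≤ n} : ℝ) ≤ A * n) :
    ∑ p ∈ s, 1 / (p : ℝ) ^ 2 ≤ 2 * A / (m + 1) := by
  set F : ℕ → ℝ := fun i => 1 / (i : ℝ) ^ 2
  set N := s.sup id + m + 1
  have hsN : ∀ p ∈ s, p < N := fun p hp => by
    have : p ≤ s.sup id := le_sup (f := id) hp
    omega
  have hA : 0 ≤ A := by simpa using (Nat.cast_nonneg _).trans (hcount 1)
  have hm : (0 : ℝ) < m + 1 := by positivity
  have hN : (m : ℝ) + 1 ≤ N := by norm_cast; omega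
  have htelescope : ∀ p ∈ s, F p = F N + ∑ i ∈ Ico p N, (F i - F (i + 1)) := fun p hp => by
    rw [sum_Ico_sub_succ F (hsN p hp).le]
    ring
  have hswap : ∑ p ∈ s, ∑ i ∈ Ico p N, (F i - F (i + 1))
      = ∑ i ∈ Ico (m + 1) N, (#{p ∈ s | p ≤ i} : ℝ) * (F i - F (i + 1)) := by
    rw [sum_comm' (t' := Ico (m + 1) N) (s' := fun i => {p ∈ s | p ≤ i})]
    · simp only [sum_const, nsmul_eq_mul]
    · intro p i
      simp only [mem_Ico, mem_filter]
      constructor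
      · rintro ⟨hp, hpi, hiN⟩
        exact ⟨⟨hp, hpi⟩, by linarith [hs p hp], hiN⟩
      · rintro ⟨⟨hp, hpi⟩, -, hiN⟩
        exact ⟨hp, hpi, hiN⟩
  have hterm : ∀ i ∈ Ico (m + 1) N,
      (#{p ∈ s | p ≤ i} : ℝ) * (F i - F (i + 1)) ≤ 2 * A * (1 / i - 1 / (i + 1)) := by
    intro i hi
    have hi : (1 : ℝ) ≤ i := by norm_cast; linarith [(mem_Ico.1 hi).1]
    have hF : 0 ≤ F i - F (i + 1) := by
      simp only [F]
      push_cast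
      exact sub_nonneg.2 (one_div_le_one_div_of_le (by positivity) (by gcongr; linarith))
    have hiF : (i : ℝ) * (F i - F (i + 1)) ≤ 2 * (1 / i - 1 / (i + 1)) := by
      simp only [F]
      push_cast
      rw [← sub_nonneg]
      have : 2 * (1 / (i : ℝ) - 1 / (i + 1)) - i * (1 / i ^ 2 - 1 / (i + 1) ^ 2)
          = 1 / (i * (i + 1) ^ 2) := by field_simp; ring
      rw [this]
      positivity
    calc (#{p ∈ s | p ≤ i} : ℝ) * (F i - F (i + 1)) ≤ A * i * (F i - F (i + 1)) :=
          mul_le_mul_of_nonneg_right (hcount i) hF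
      _ ≤ A * (2 * (1 / i - 1 / (i + 1))) := by rw [mul_assoc]; gcongr
      _ = 2 * A * (1 / i - 1 / (i + 1)) := by ring
  have hboundary : (#s : ℝ) * F N ≤ A / N := by
    have hcard : (#s : ℝ) ≤ A * N := by
      simpa [filter_true_of_mem fun p hp => (hsN p hp).le] using hcount N
    have hN0 : (0 : ℝ) < N := by linarith
    calc (#s : ℝ) * F N ≤ A * N * F N := mul_le_mul_of_nonneg_right hcard (by positivity)
      _ = A / N := by simp only [F]; field_simp
  have hsum : ∑ i ∈ Ico (m + 1) N, (1 / (i : ℝ) - 1 / (i + 1)) = 1 / (m + 1) - 1 / N := by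
    have := sum_Ico_sub_succ (fun i : ℕ => 1 / (i : ℝ)) (show m + 1 ≤ N by omega)
    push_cast at this
    exact this
  calc ∑ p ∈ s, 1 / (p : ℝ) ^ 2 = #s * F N + ∑ p ∈ s, ∑ i ∈ Ico p N, (F i - F (i + 1)) := by
        rw [sum_congr rfl htelescope, sum_add_distrib, sum_const, nsmul_eq_mul]
    _ ≤ A / N + ∑ i ∈ Ico (m + 1) N, 2 * A * (1 / (i : ℝ) - 1 / (i + 1)) := by
        rw [hswap]
        exact add_le_add hboundary (sum_le_sum hterm)
    _ = 2 * A / (m + 1) - A / N := by rw [← mul_sum, hsum]; ring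
    _ ≤ 2 * A / (m + 1) := by linarith [div_nonneg hA (by linarith : (0 : ℝ) ≤ N)]

lemma sum_inv_sq_le_of_prime_lt {y : ℝ} (hy : 2 ≤ y) {s : Finset ℕ}
    (hs : ∀ p ∈ s, p.Prime ∧ y < p) :
    ∑ p ∈ s, 1 / (p : ℝ) ^ 2 ≤ 2 * log 4 / (y * log y) := by
  set m := ⌊y⌋₊
  have hm : 2 ≤ m := Nat.le_floor (by exact_mod_cast hy)
  have hym : y < m + 1 := Nat.lt_floor_add_one y
  have hms : ∀ p ∈ s, m < p := fun p hp => (Nat.floor_lt (by linarith)).2 (hs p hp).2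
  have hlog : 0 < log (m + 1) := log_pos (by norm_cast; omega)
  have hcount : ∀ n : ℕ, (#{p ∈ s | p ≤ n} : ℝ) ≤ log 4 / log (m + 1) * n := fun n => by
    have hpow := pow_card_le_four_pow (t := {p ∈ s | p ≤ n}) (m := m) (n := n) fun p hp => by
      obtain ⟨hp, hpn⟩ := mem_filter.1 hp
      exact ⟨(hs p hp).1, hms p hp, hpn⟩
    have := log_le_log (by positivity) (by exact_mod_cast hpow : ((m : ℝ) + 1) ^ _ ≤ 4 ^ n)
    rw [log_pow, log_pow] at this
    rw [div_mul_eq_mul_div, le_div_iff₀ hlog]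
    linarith
  calc ∑ p ∈ s, 1 / (p : ℝ) ^ 2 ≤ 2 * (log 4 / log (m + 1)) / (m + 1) :=
        sum_inv_sq_le_of_card_le hms hcount
    _ = 2 * log 4 / ((m + 1) * log (m + 1)) := by field_simp
    _ ≤ 2 * log 4 / (y * log y) := by
        have : 0 < log y := log_pos (by linarith)
        gcongr

lemma localRatio_le_one (m p : ℕ) : localRatio m p ≤ 1 :=
  one_add_pow_mul_one_sub_le_one m (by linarith [(by positivity : (0 : ℝ) ≤ (p : ℝ)⁻¹)])

lemma localRatio_nonneg {m p : ℕ} (hmp : m ≤ p) : 0 ≤ localRatio m p := by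
  have := sub_nonneg.2 (mul_inv_le_one_of_le₀ (Nat.cast_le.2 hmp) (p.cast_nonneg (α := ℝ)))
  unfold localRatio
  positivity

lemma one_sub_localRatio_le {m p : ℕ} (hmp : m ≤ p) :
    1 - localRatio m p ≤ m ^ 2 * (1 / (p : ℝ) ^ 2) := by
  have hx : (-2 : ℝ) ≤ (p : ℝ)⁻¹ := by linarith [(by positivity : (0 : ℝ) ≤ (p : ℝ)⁻¹)]
  have := one_sub_sq_le_one_add_pow_mul m hx
    (mul_inv_le_one_of_le₀ (Nat.cast_le.2 hmp) (p.cast_nonneg (α := ℝ)))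
  rw [localRatio]
  have : ((m : ℝ) * (p : ℝ)⁻¹) ^ 2 = m ^ 2 * (1 / (p : ℝ) ^ 2) := by ring
  linarith

lemma abs_localRatio_le (m p : ℕ) : |localRatio m p| ≤ 2 ^ m * (m + 1) :=
  abs_one_add_pow_mul_le m (inv_nonneg.2 p.cast_nonneg) (Nat.cast_inv_le_one p)

lemma abs_prod_localRatio_le (m : ℕ) (t : Finset ℕ) :
    |∏ p ∈ t, localRatio m p| ≤ (2 ^ m * (m + 1)) ^ m := by
  have hc : (1 : ℝ) ≤ 2 ^ m * (m + 1) :=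
    one_le_mul_of_one_le_of_one_le (one_le_pow₀ (by norm_num)) (by simp)
  have hcard : #{p ∈ t | p < m} ≤ m :=
    calc #{p ∈ t | p < m} ≤ #(range m) := card_le_card fun p hp => mem_range.2 (mem_filter.1 hp).2
      _ = m := card_range m
  have hsmall : ∏ p ∈ t with p < m, |localRatio m p| ≤ (2 ^ m * (m + 1)) ^ #{p ∈ t | p < m} := by
    rw [← prod_const]
    exact prod_le_prod (fun _ _ => abs_nonneg _) fun p _ => abs_localRatio_le m p
  have hlarge : ∏ p ∈ t with ¬p < m, |localRatio m p| ≤ 1 := by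
    refine prod_le_one (fun _ _ => abs_nonneg _) fun p hp => ?_
    rw [abs_of_nonneg (localRatio_nonneg (not_lt.1 (mem_filter.1 hp).2))]
    exact localRatio_le_one m p
  rw [abs_prod, ← prod_filter_mul_prod_filter_not t (· < m)]
  calc (∏ p ∈ t with p < m, |localRatio m p|) * ∏ p ∈ t with ¬p < m, |localRatio m p|
      ≤ (2 ^ m * (m + 1)) ^ #{p ∈ t | p < m} * 1 :=
        mul_le_mul hsmall hlarge (prod_nonneg fun _ _ => abs_nonneg _) (by positivity)
    _ ≤ (2 ^ m * (m + 1)) ^ m := by rw [mul_one]; exact pow_le_pow_right₀ hc hcard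

lemma abs_prod_localRatio_sub_one_le {m : ℕ} {y : ℝ} (hy : 2 ≤ y) (hmy : m ≤ y) {t : Finset ℕ}
    (ht : ∀ p ∈ t, p.Prime ∧ y < p) :
    |∏ p ∈ t, localRatio m p - 1| ≤ m ^ 2 * (2 * log 4) / (y * log y) := by
  have hmp : ∀ p ∈ t, m ≤ p := fun p hp => by exact_mod_cast hmy.trans (ht p hp).2.le
  calc |∏ p ∈ t, localRatio m p - 1| ≤ ∑ p ∈ t, (1 - localRatio m p) :=
        abs_prod_sub_one_le_sum t (fun p hp => localRatio_nonneg (hmp p hp))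
          fun p _ => localRatio_le_one m p
    _ ≤ ∑ p ∈ t, (m : ℝ) ^ 2 * (1 / (p : ℝ) ^ 2) :=
        sum_le_sum fun p hp => one_sub_localRatio_le (hmp p hp)
    _ = m ^ 2 * ∑ p ∈ t, 1 / (p : ℝ) ^ 2 := (mul_sum _ _ _).symm
    _ ≤ m ^ 2 * (2 * log 4 / (y * log y)) := by gcongr; exact sum_inv_sq_le_of_prime_lt hy ht
    _ = m ^ 2 * (2 * log 4) / (y * log y) := by ring

lemma exists_abs_prod_localRatio_sub_one_le (m : ℕ) :
    ∃ C : ℝ, ∀ y : ℝ, 2 ≤ y → ∀ t : Finset ℕ, (∀ p ∈ t, p.Prime ∧ y < p) →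
      |∏ p ∈ t, localRatio m p - 1| ≤ C / (y * log y) := by
  set c : ℝ := 2 ^ m * (m + 1)
  refine ⟨m ^ 2 * (2 * log 4) + (c ^ m + 1) * m ^ 2, fun y hy t ht => ?_⟩
  have hyl : 0 < y * log y := mul_pos (by linarith) (log_pos (by linarith))
  rcases le_or_gt (m : ℝ) y with hmy | hym
  · calc |∏ p ∈ t, localRatio m p - 1| ≤ m ^ 2 * (2 * log 4) / (y * log y) :=
          abs_prod_localRatio_sub_one_le hy hmy ht
      _ ≤ _ := by gcongr; exact le_add_of_nonneg_right (by positivity)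
  · have hylm : y * log y ≤ m ^ 2 := by
      have := log_le_sub_one_of_pos (by linarith : 0 < y)
      nlinarith
    calc |∏ p ∈ t, localRatio m p - 1| ≤ |∏ p ∈ t, localRatio m p| + |1| := abs_sub _ _
      _ ≤ c ^ m + 1 := by rw [abs_one]; linarith [abs_prod_localRatio_le m t]
      _ = (c ^ m + 1) * (y * log y) / (y * log y) := (mul_div_cancel_right₀ _ hyl.ne').symm
      _ ≤ (c ^ m + 1) * m ^ 2 / (y * log y) := by gcongr
      _ ≤ _ := by gcongr; exact le_add_of_nonneg_left (by positivity)

/-- Tail estimate for the singular series Euler product: if for all primes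
`p ≡ 3 (4)` with `p > y` the local ratio `δ p` equals `(1+1/p)^{k-1}(1-(k-1)/p)`,
then `∏_{p > y, p ≡ 3 (4)} δ p = 1 + O_k(1/(y log y))`. -/
theorem statement14 (k : ℕ) (hk : 1 ≤ k) :
    ∃ C : ℝ, ∀ y : ℝ, 2 ≤ y → ∀ δ : ℕ → ℝ,
      (∀ p : ℕ, p.Prime → p % 4 = 3 → y < (p : ℝ) →
        δ p = (1 + 1 / (p : ℝ)) ^ (k - 1) * (1 - ((k : ℝ) - 1) / (p : ℝ))) →
      |(∏' p : {p : ℕ // p.Prime ∧ p % 4 = 3 ∧ y < (p : ℝ)}, δ p) - 1|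
        ≤ C / (y * Real.log y) := by
  obtain ⟨C, hC⟩ := exists_abs_prod_localRatio_sub_one_le (k - 1)
  refine ⟨C, fun y hy δ hδ => ?_⟩
  have hδ' : ∀ p : {p : ℕ // p.Prime ∧ p % 4 = 3 ∧ y < (p : ℝ)}, δ p = localRatio (k - 1) p := by
    rintro ⟨p, hp, hp4, hyp⟩
    rw [hδ p hp hp4 hyp, localRatio, Nat.cast_sub hk]
    simp [div_eq_mul_inv]
  refine abs_tprod_sub_one_le (by simpa using hC y hy ∅ (by simp)) fun s => ?_
  have := hC y hy (s.map (Function.Embedding.subtype _)) (by simp +contextual)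
  simpa [prod_map, hδ'] using this
end
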